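/- arXiv:1501.03285 — 15 statements merged into one kernel-verified Lean document; each statement's English description precedes it below -/
import Mathlib

section
/- Let X and Y be independent absolutely continuous nonnegative random variables with cdfs F and G and pdfs f and g, where F(t) > 0 for all t > 0. Then for every x > 0, the reversed relevation transform satisfies G#̃F(x) = G(x) + F(x)·∫_x^∞ (g(t)/F(t)) dt ≥ G(x) + F(x) − F(x)G(x); since the right-hand side is the cdf of min{X,Y}, this means X[Y] ≤_st min{X,Y}, i.e. the random variable X[Y] with cdf G#̃F is smaller than min{X,Y} in the usual stochastic order. -/
open MeasureTheory Set Filter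

/-- For independent absolutely continuous nonnegative random variables `X`, `Y`
with cdfs `F`, `G` and pdfs `f`, `g`, where `F t > 0` for `t > 0`, the reversed relevation
transform `G#̃F(x) = G x + F x * ∫_x^∞ g t / F t dt` dominates the cdf of `min{X,Y}`,
i.e. `X[Y] ≤_st min{X,Y}`. -/
theorem reversed_relevation_le_st_min
    (F G f g : ℝ → ℝ)
    (hf : ∀ t, 0 ≤ f t) (hg : ∀ t, 0 ≤ g t)
    (hF : ∀ x, F x = ∫ t in Iic x, f t)
    (hG : ∀ x, G x = ∫ t in Iic x, g t)
    (hFpos : ∀ t, 0 < t → 0 < F t)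
    (hFle : ∀ t, F t ≤ 1)
    (hgint : Integrable g)
    (hGtail : ∀ x, 0 < x → (∫ t in Ioi x, g t) = 1 - G x)
    (hint : ∀ x, 0 < x → IntegrableOn (fun t => g t / F t) (Ioi x)) :
    ∀ x, 0 < x →
      G x + F x * ∫ t in Ioi x, g t / F t ≥ G x + F x - F x * G x := by
  intro x hx
  have key : (∫ t in Ioi x, g t) ≤ ∫ t in Ioi x, g t / F t := by
    apply setIntegral_mono_on hgint.integrableOn (hint x hx) measurableSet_Ioi
    intro t ht
    have hFt : 0 < F t := hFpos t (hx.trans ht)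
    calc g t = g t / 1 := by ring
    _ ≤ g t / F t := by
      apply div_le_div_of_nonneg_left (hg t) hFt (hFle t)
  have h1 : F x * (1 - G x) ≤ F x * ∫ t in Ioi x, g t / F t := by
    apply mul_le_mul_of_nonneg_left _ (hFpos x hx).le
    rw [← hGtail x hx]; exact key
  nlinarith [h1]
end

section
/- Let X and Y be independent absolutely continuous nonnegative random variables with cdfs F and G and continuously differentiable pdfs f and g which are strictly positive on (0,∞), with F(t) > 0 and G(t) > 0 for all t > 0. Then the reversed relevation transform is commutative, i.e. G#̃F(x) = F#̃G(x) for all x > 0, if and only if X and Y satisfy the proportional reversed hazards rate model, i.e. there exists a constant θ > 0 such that G(x) = [F(x)]^θ for all x > 0. -/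
/-!
Write `I x = ∫_x^∞ g/F` and `J x = ∫_x^∞ f/G`, so that `I' = -g/F` and `J' = -f/G`.
Differentiating the commutativity relation `G + F I = F + G J` gives `f I = g J`; differentiating
once more and eliminating `I` and `J` (using `I > 0`) shows that the reversed hazard rates `f/F`
and `g/G` have the same logarithmic derivative, hence `g/G = θ f/F` for a constant `θ > 0`.
Then `log G - θ log F` is constant and tends to `0` at infinity, so `G = F^θ`.
Conversely, if `G = F^θ` both tail integrals are explicit powers of `F` and the relation is an
identity.
-/

open MeasureTheory Set Filter Topology

theorem hasDerivAt_integral_Ioi {h : ℝ → ℝ} {a x : ℝ} (hint : IntegrableOn h (Ioi a))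
    (hax : a < x) (hc : ContinuousAt h x) :
    HasDerivAt (fun y => ∫ t in Ioi y, h t) (-h x) x := by
  have hii : IntervalIntegrable h volume a x :=
    (intervalIntegrable_iff_integrableOn_Ioc_of_le hax.le).2 (hint.mono_set Ioc_subset_Ioi_self)
  have hmeas : StronglyMeasurableAtFilter h (𝓝 x) :=
    ⟨Ioi a, Ioi_mem_nhds hax, hint.aestronglyMeasurable⟩
  refine ((intervalIntegral.integral_hasDerivAt_right hii hmeas hc).const_sub
    (∫ t in Ioi a, h t)).congr_of_eventuallyEq ?_
  filter_upwards [Ioi_mem_nhds hax] with y hy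
  rw [← intervalIntegral.integral_Ioi_sub_Ioi hint hy.le, sub_sub_cancel]

theorem setIntegral_Ioi_pos {h : ℝ → ℝ} {x : ℝ} (hpos : ∀ t, x < t → 0 < h t)
    (hint : IntegrableOn h (Ioi x)) : 0 < ∫ t in Ioi x, h t := by
  have hsupp : Function.support h ∩ Ioi x = Ioi x := inter_eq_right.2 fun t ht => (hpos t ht).ne'
  rw [setIntegral_pos_iff_support_of_nonneg_ae
    ((ae_restrict_iff' measurableSet_Ioi).2 (.of_forall fun t ht => (hpos t ht).le)) hint, hsupp]
  simp [Real.volume_Ioi]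

theorem eq_of_hasDerivAt_zero_Ioi {φ : ℝ → ℝ} {a x y : ℝ} (hφ : ∀ t, a < t → HasDerivAt φ 0 t)
    (hx : a < x) (hy : a < y) : φ x = φ y :=
  isOpen_Ioi.is_const_of_deriv_eq_zero isPreconnected_Ioi
    (fun t ht => (hφ t ht).differentiableAt.differentiableWithinAt) (fun t ht => (hφ t ht).deriv)
    hx hy

theorem eq_of_hasDerivAt_zero_of_tendsto {φ : ℝ → ℝ} {a L x : ℝ}
    (hφ : ∀ t, a < t → HasDerivAt φ 0 t) (hlim : Tendsto φ atTop (𝓝 L)) (hx : a < x) :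
    φ x = L :=
  tendsto_nhds_unique (tendsto_const_nhds.congr' <| eventually_atTop.2
    ⟨x, fun _ hy => eq_of_hasDerivAt_zero_Ioi hφ hx (hx.trans_le hy)⟩) hlim

theorem HasDerivAt.unique_of_eqOn_Ioi {φ ψ : ℝ → ℝ} {a x d e : ℝ} (hφ : HasDerivAt φ d x)
    (hψ : HasDerivAt ψ e x) (h : ∀ t, a < t → φ t = ψ t) (hx : a < x) : d = e :=
  hφ.unique <| hψ.congr_of_eventuallyEq <| eventually_of_mem (Ioi_mem_nhds hx) h

theorem integral_Ioi_mul_rpow_sub_one {F f : ℝ → ℝ} {x α : ℝ} (hα : α ≠ 0)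
    (hf : ∀ t, x ≤ t → HasDerivAt F (f t) t) (hf0 : ∀ t, x < t → 0 ≤ f t)
    (hFpos : ∀ t, x ≤ t → 0 < F t) (hlim : Tendsto F atTop (𝓝 1)) :
    ∫ t in Ioi x, f t * F t ^ (α - 1) = (1 - F x ^ α) / α := by
  have hderiv : ∀ t ∈ Ici x, HasDerivAt (fun s => F s ^ α / α) (f t * F t ^ (α - 1)) t :=
    fun t ht => (((hf t ht).rpow_const (Or.inl (hFpos t ht).ne')).div_const α).congr_deriv
      (by field_simp)
  have hlimα : Tendsto (fun s => F s ^ α / α) atTop (𝓝 (1 / α)) := by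
    simpa using ((Real.continuousAt_rpow_const 1 α (Or.inl one_ne_zero)).tendsto.comp
      hlim).div_const α
  have hderiv0 : ∀ t ∈ Ioi x, 0 ≤ f t * F t ^ (α - 1) := fun t ht =>
    mul_nonneg (hf0 t ht) (Real.rpow_nonneg (hFpos t ht.out.le).le _)
  rw [integral_Ioi_of_hasDerivAt_of_nonneg' hderiv hderiv0 hlimα, sub_div]

theorem logDeriv_reversedHazard_eq_of_relevation_comm {F G f g f' g' I J : ℝ → ℝ}
    (hf : ∀ x, 0 < x → HasDerivAt F (f x) x) (hg : ∀ x, 0 < x → HasDerivAt G (g x) x)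
    (hf' : ∀ x, 0 < x → HasDerivAt f (f' x) x) (hg' : ∀ x, 0 < x → HasDerivAt g (g' x) x)
    (hI : ∀ x, 0 < x → HasDerivAt I (-(g x / F x)) x)
    (hJ : ∀ x, 0 < x → HasDerivAt J (-(f x / G x)) x)
    (hfpos : ∀ x, 0 < x → 0 < f x) (hgpos : ∀ x, 0 < x → 0 < g x)
    (hFpos : ∀ x, 0 < x → 0 < F x) (hGpos : ∀ x, 0 < x → 0 < G x)
    (hIpos : ∀ x, 0 < x → 0 < I x)
    (hE : ∀ x, 0 < x → G x + F x * I x = F x + G x * J x) (x : ℝ) (hx : 0 < x) :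
    f' x / f x - f x / F x = g' x / g x - g x / G x := by
  have hfI : ∀ y, 0 < y → f y * I y = g y * J y := fun y hy => by
    have hd := ((hg y hy).add ((hf y hy).mul (hI y hy))).unique_of_eqOn_Ioi
      ((hf y hy).add ((hg y hy).mul (hJ y hy))) hE hy
    field_simp [(hFpos y hy).ne', (hGpos y hy).ne'] at hd
    linarith
  have hd := ((hf' x hx).mul (hI x hx)).unique_of_eqOn_Ioi ((hg' x hx).mul (hJ x hx)) hfI hx
  field_simp [(hFpos x hx).ne', (hGpos x hx).ne'] at hd
  have hIGF : g x * (G x - F x) = I x * (f x * G x - g x * F x) := by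
    linear_combination g x * hE x hx - G x * hfI x hx
  have hode : (f' x * g x - g' x * f x) * (F x * G x) = f x * g x * (f x * G x - g x * F x) :=
    mul_left_cancel₀ (hIpos x hx).ne' <| by
      linear_combination g x * hd - g' x * F x * G x * hfI x hx + f x * g x * hIGF
  field_simp [(hfpos x hx).ne', (hgpos x hx).ne', (hFpos x hx).ne', (hGpos x hx).ne']
  linear_combination hode

theorem exists_reversedHazard_eq_const_mul {F G f g f' g' : ℝ → ℝ}
    (hf : ∀ x, 0 < x → HasDerivAt F (f x) x) (hg : ∀ x, 0 < x → HasDerivAt G (g x) x)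
    (hf' : ∀ x, 0 < x → HasDerivAt f (f' x) x) (hg' : ∀ x, 0 < x → HasDerivAt g (g' x) x)
    (hfpos : ∀ x, 0 < x → 0 < f x) (hgpos : ∀ x, 0 < x → 0 < g x)
    (hFpos : ∀ x, 0 < x → 0 < F x) (hGpos : ∀ x, 0 < x → 0 < G x)
    (h : ∀ x, 0 < x → f' x / f x - f x / F x = g' x / g x - g x / G x) :
    ∃ θ, 0 < θ ∧ ∀ x, 0 < x → g x / G x = θ * (f x / F x) := by
  set φ : ℝ → ℝ := fun y => Real.log (g y) - Real.log (G y) - (Real.log (f y) - Real.log (F y))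
  have hφ : ∀ x, 0 < x → HasDerivAt φ 0 x := fun x hx =>
    ((((hg' x hx).log (hgpos x hx).ne').sub ((hg x hx).log (hGpos x hx).ne')).sub
      (((hf' x hx).log (hfpos x hx).ne').sub ((hf x hx).log (hFpos x hx).ne'))).congr_deriv
      (by rw [h x hx]; ring)
  refine ⟨Real.exp (φ 1), Real.exp_pos _, fun x hx => ?_⟩
  rw [← eq_of_hasDerivAt_zero_Ioi hφ hx one_pos]
  simp only [φ, Real.exp_sub, Real.exp_log (hfpos x hx), Real.exp_log (hgpos x hx),
    Real.exp_log (hFpos x hx), Real.exp_log (hGpos x hx)]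
  field_simp [(hfpos x hx).ne', (hFpos x hx).ne']

theorem eq_rpow_of_reversedHazard_eq_const_mul {F G f g : ℝ → ℝ} {θ : ℝ}
    (hf : ∀ x, 0 < x → HasDerivAt F (f x) x) (hg : ∀ x, 0 < x → HasDerivAt G (g x) x)
    (hFpos : ∀ x, 0 < x → 0 < F x) (hGpos : ∀ x, 0 < x → 0 < G x)
    (hFlim : Tendsto F atTop (𝓝 1)) (hGlim : Tendsto G atTop (𝓝 1))
    (h : ∀ x, 0 < x → g x / G x = θ * (f x / F x)) (x : ℝ) (hx : 0 < x) :
    G x = F x ^ θ := by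
  set ψ : ℝ → ℝ := fun y => Real.log (G y) - θ * Real.log (F y)
  have hψ : ∀ x, 0 < x → HasDerivAt ψ 0 x := fun x hx =>
    (((hg x hx).log (hGpos x hx).ne').sub
      (((hf x hx).log (hFpos x hx).ne').const_mul θ)).congr_deriv (sub_eq_zero.2 (h x hx))
  have hlog := (Real.continuousAt_log one_ne_zero).tendsto
  have hψlim : Tendsto ψ atTop (𝓝 0) := by
    simpa using (hlog.comp hGlim).sub ((hlog.comp hFlim).const_mul θ)
  have hψx := eq_of_hasDerivAt_zero_of_tendsto hψ hψlim hx
  rw [Real.rpow_def_of_pos (hFpos x hx), ← Real.exp_log (hGpos x hx)]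
  simp only [ψ] at hψx
  congr 1
  linarith

theorem relevation_comm_of_eq_rpow {F G f g : ℝ → ℝ} {θ : ℝ}
    (hf : ∀ x, 0 < x → HasDerivAt F (f x) x) (hg : ∀ x, 0 < x → HasDerivAt G (g x) x)
    (hfpos : ∀ x, 0 < x → 0 < f x) (hFpos : ∀ x, 0 < x → 0 < F x)
    (hFlim : Tendsto F atTop (𝓝 1)) (hGF : ∀ x, 0 < x → G x = F x ^ θ) (x : ℝ) (hx : 0 < x) :
    G x + F x * ∫ t in Ioi x, g t / F t = F x + G x * ∫ t in Ioi x, f t / G t := by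
  have hgf : ∀ t, 0 < t → g t = f t * θ * F t ^ (θ - 1) := fun t ht =>
    (hg t ht).unique_of_eqOn_Ioi ((hf t ht).rpow_const (Or.inl (hFpos t ht).ne')) hGF ht
  have hf' : ∀ t, x ≤ t → HasDerivAt F (f t) t := fun t ht => hf t (hx.trans_le ht)
  have hf0 : ∀ t, x < t → 0 ≤ f t := fun t ht => (hfpos t (hx.trans ht)).le
  have hFpos' : ∀ t, x ≤ t → 0 < F t := fun t ht => hFpos t (hx.trans_le ht)
  rcases eq_or_ne θ 1 with rfl | hθ
  · simp only [Real.rpow_one, sub_self, Real.rpow_zero, mul_one] at hGF hgf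
    have hIJ : ∫ t in Ioi x, g t / F t = ∫ t in Ioi x, f t / G t :=
      setIntegral_congr_fun measurableSet_Ioi fun t ht => by
        simp only [hgf t (hx.trans ht), hGF t (hx.trans ht)]
    rw [hIJ, hGF x hx]
  have hI : ∫ t in Ioi x, g t / F t = θ * ((1 - F x ^ (θ - 1)) / (θ - 1)) := by
    rw [← integral_Ioi_mul_rpow_sub_one (sub_ne_zero.2 hθ) hf' hf0 hFpos' hFlim,
      ← integral_const_mul]
    refine setIntegral_congr_fun measurableSet_Ioi fun t ht => ?_
    rw [hgf t (hx.trans ht), Real.rpow_sub_one (hFpos t (hx.trans ht)).ne' (θ - 1)]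
    field_simp
  have hJ : ∫ t in Ioi x, f t / G t = (1 - F x ^ (1 - θ)) / (1 - θ) := by
    rw [← integral_Ioi_mul_rpow_sub_one (sub_ne_zero.2 hθ.symm) hf' hf0 hFpos' hFlim]
    refine setIntegral_congr_fun measurableSet_Ioi fun t ht => ?_
    rw [hGF t (hx.trans ht), sub_sub_cancel_left, Real.rpow_neg (hFpos t (hx.trans ht)).le,
      div_eq_mul_inv]
  have hFx := hFpos x hx
  rw [hI, hJ, hGF x hx, Real.rpow_sub_one hFx.ne', Real.rpow_sub hFx, Real.rpow_one]
  have : F x ^ θ ≠ 0 := (Real.rpow_pos_of_pos hFx θ).ne'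
  field_simp [sub_ne_zero.2 hθ, sub_ne_zero.2 hθ.symm, hFx.ne']
  ring

theorem reversed_relevation_comm_iff_prhr_general
    (F G f g : ℝ → ℝ)
    (hfC : ContDiff ℝ 1 f) (hgC : ContDiff ℝ 1 g)
    (hfpos : ∀ x, 0 < x → 0 < f x) (hgpos : ∀ x, 0 < x → 0 < g x)
    (hf : ∀ x, 0 < x → HasDerivAt F (f x) x)
    (hg : ∀ x, 0 < x → HasDerivAt G (g x) x)
    (hFpos : ∀ t, 0 < t → 0 < F t) (hGpos : ∀ t, 0 < t → 0 < G t)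
    (hFlim : Tendsto F atTop (nhds 1)) (hGlim : Tendsto G atTop (nhds 1))
    (hint1 : ∀ x, 0 < x → IntegrableOn (fun t => g t / F t) (Ioi x))
    (hint2 : ∀ x, 0 < x → IntegrableOn (fun t => f t / G t) (Ioi x)) :
    (∀ x, 0 < x →
        G x + F x * ∫ t in Ioi x, g t / F t
          = F x + G x * ∫ t in Ioi x, f t / G t)
      ↔ ∃ θ : ℝ, 0 < θ ∧ ∀ x, 0 < x → G x = F x ^ θ := by
  refine ⟨fun hE => ?_, fun ⟨θ, _, hGF⟩ => relevation_comm_of_eq_rpow hf hg hfpos hFpos hFlim hGF⟩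
  set I : ℝ → ℝ := fun y => ∫ t in Ioi y, g t / F t
  set J : ℝ → ℝ := fun y => ∫ t in Ioi y, f t / G t
  have hI : ∀ x, 0 < x → HasDerivAt I (-(g x / F x)) x := fun x hx =>
    hasDerivAt_integral_Ioi (hint1 (x / 2) (by positivity)) (by linarith)
      (hgC.continuous.continuousAt.div (hf x hx).continuousAt (hFpos x hx).ne')
  have hJ : ∀ x, 0 < x → HasDerivAt J (-(f x / G x)) x := fun x hx =>
    hasDerivAt_integral_Ioi (hint2 (x / 2) (by positivity)) (by linarith)
      (hfC.continuous.continuousAt.div (hg x hx).continuousAt (hGpos x hx).ne')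
  have hIpos : ∀ x, 0 < x → 0 < I x := fun x hx =>
    setIntegral_Ioi_pos (fun t ht => div_pos (hgpos t (hx.trans ht)) (hFpos t (hx.trans ht)))
      (hint1 x hx)
  have hf' : ∀ x, 0 < x → HasDerivAt f (deriv f x) x := fun x _ =>
    (hfC.differentiable one_ne_zero x).hasDerivAt
  have hg' : ∀ x, 0 < x → HasDerivAt g (deriv g x) x := fun x _ =>
    (hgC.differentiable one_ne_zero x).hasDerivAt
  obtain ⟨θ, hθ, hratio⟩ := exists_reversedHazard_eq_const_mul hf hg hf' hg' hfpos hgpos hFpos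
    hGpos (logDeriv_reversedHazard_eq_of_relevation_comm hf hg hf' hg' hI hJ hfpos hgpos hFpos
      hGpos hIpos hE)
  exact ⟨θ, hθ, eq_rpow_of_reversedHazard_eq_const_mul hf hg hFpos hGpos hFlim hGlim hratio⟩

/-- The reversed relevation transform is commutative,
`G#̃F(x) = F#̃G(x)` for all `x > 0`, if and only if `X` and `Y` satisfy the proportional
reversed hazards rate model, i.e. there is `θ > 0` with `G x = (F x)^θ` for all `x > 0`. -/
theorem reversed_relevation_comm_iff_prhr
    (F G f g : ℝ → ℝ)
    (hfC : ContDiff ℝ 1 f) (hgC : ContDiff ℝ 1 g)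
    (hfpos : ∀ x, 0 < x → 0 < f x) (hgpos : ∀ x, 0 < x → 0 < g x)
    (hf : ∀ x, 0 < x → HasDerivAt F (f x) x)
    (hg : ∀ x, 0 < x → HasDerivAt G (g x) x)
    (hFpos : ∀ t, 0 < t → 0 < F t) (hGpos : ∀ t, 0 < t → 0 < G t)
    (hFle : ∀ t, F t ≤ 1) (hGle : ∀ t, G t ≤ 1)
    (hFlim : Tendsto F atTop (nhds 1)) (hGlim : Tendsto G atTop (nhds 1))
    (hint1 : ∀ x, 0 < x → IntegrableOn (fun t => g t / F t) (Ioi x))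
    (hint2 : ∀ x, 0 < x → IntegrableOn (fun t => f t / G t) (Ioi x)) :
    (∀ x, 0 < x →
        G x + F x * ∫ t in Ioi x, g t / F t
          = F x + G x * ∫ t in Ioi x, f t / G t)
      ↔ ∃ θ : ℝ, 0 < θ ∧ ∀ x, 0 < x → G x = F x ^ θ :=
  reversed_relevation_comm_iff_prhr_general F G f g hfC hgC hfpos hgpos hf hg hFpos hGpos hFlim
    hGlim hint1 hint2
end

section
/- Let X and Y be independent absolutely continuous nonnegative random variables with cdfs F and G, survival functions F̄ = 1 − F and Ḡ = 1 − G, and pdfs f and g, where F̄(t) > 0 for all t > 0. Then for every x > 0, the relevation transform satisfies Ḡ#F̄(x) = Ḡ(x) + F̄(x)·∫_0^x (g(t)/F̄(t)) dt ≥ 1 − F(x)G(x); since the right-hand side is the survival function of max{X,Y}, this means X(Y) ≥_st max{X,Y}, i.e. the random variable X(Y) with survival function Ḡ#F̄ is larger than max{X,Y} in the usual stochastic order. -/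
open MeasureTheory Set Filter

/-- For independent absolutely continuous nonnegative random variables `X`, `Y`
with survival functions `F̄ = 1 - F`, `Ḡ = 1 - G` and pdfs `f`, `g`, where `F̄ t > 0` for
`t > 0`, the relevation transform `Ḡ#F̄(x) = Ḡ x + F̄ x * ∫_0^x g t / F̄ t dt` dominates
the survival function of `max{X,Y}`, i.e. `X(Y) ≥_st max{X,Y}`. -/
theorem relevation_ge_st_max
    (F G f g : ℝ → ℝ)
    (hf : ∀ t, 0 ≤ f t) (hg : ∀ t, 0 ≤ g t)
    (hF : ∀ x, F x = ∫ t in Iic x, f t)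
    (hFbarpos : ∀ t, 0 < t → 0 < 1 - F t)
    (hFnonneg : ∀ t, 0 ≤ F t)
    (hG : ∀ x, 0 < x → (∫ t in (0:ℝ)..x, g t) = G x)
    (hgint : ∀ x, 0 < x → IntervalIntegrable g volume 0 x)
    (hint : ∀ x, 0 < x → IntervalIntegrable (fun t => g t / (1 - F t)) volume 0 x) :
    ∀ x, 0 < x →
      (1 - G x) + (1 - F x) * ∫ t in (0:ℝ)..x, g t / (1 - F t)
        ≥ 1 - F x * G x := by
  intro x hx
  have key : (∫ t in (0:ℝ)..x, g t) ≤ ∫ t in (0:ℝ)..x, g t / (1 - F t) := by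
    rw [intervalIntegral.integral_of_le hx.le, intervalIntegral.integral_of_le hx.le]
    apply setIntegral_mono_on (hgint x hx).1 (hint x hx).1 measurableSet_Ioc
    intro t ht
    have h1 : 0 < 1 - F t := hFbarpos t ht.1
    have h2 : 1 - F t ≤ 1 := by linarith [hFnonneg t]
    rw [le_div_iff₀ h1]
    nlinarith [hg t]
  rw [hG x hx] at key
  have hb := hFbarpos x hx
  nlinarith [mul_le_mul_of_nonneg_left key hb.le]
end

section
/- Let X and Y be independent absolutely continuous nonnegative random variables with survival functions F̄ and Ḡ and continuously differentiable pdfs f and g which are strictly positive on (0,∞), with F̄(t) > 0 and Ḡ(t) > 0 for all t > 0. Then the relevation transform is commutative, i.e. Ḡ#F̄(x) = F̄#Ḡ(x) for all x > 0, if and only if X and Y satisfy the proportional hazards rate model, i.e. there exists a constant θ > 0 such that Ḡ(x) = [F̄(x)]^θ for all x > 0. -/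
/-!
Write `I = ∫₀ˣ g/F̄` and `J = ∫₀ˣ f/Ḡ`, so that `Ḡ#F̄ = Ḡ + F̄ I` and `F̄#Ḡ = F̄ + Ḡ J`.
Since `(Ḡ + F̄ I)' = -f I`, differentiating the commutativity relation gives `f I = g J`; together
with the relation itself this makes the Wronskian of `F̄ I` and `Ḡ J` vanish, so `F̄ I = θ Ḡ J` for
a constant `θ > 0`. Dividing by `f I = g J` gives proportional hazard rates `g / Ḡ = θ f / F̄`,
and integrating them gives `Ḡ = F̄ ^ θ`.

Conversely, if `Ḡ = F̄ ^ θ`, the substitution `u = F̄ t` turns `I` and `J` into integrals of powers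
of `u` over `[F̄ x, 1]`, and the relation becomes an identity between powers of `F̄ x`.
-/

open MeasureTheory Set Filter Topology intervalIntegral

noncomputable def relevationIntegral (F g : ℝ → ℝ) (x : ℝ) : ℝ :=
  ∫ t in (0:ℝ)..x, g t / (1 - F t)

/-- `relevation F G g` is `Ḡ#F̄`, written with the distribution functions `F = 1 - F̄`,
`G = 1 - Ḡ` and the density `g` of `G`. -/
noncomputable def relevation (F G g : ℝ → ℝ) (x : ℝ) : ℝ :=
  (1 - G x) + (1 - F x) * relevationIntegral F g x

theorem eq_of_hasDerivAt_zero {φ : ℝ → ℝ} {a b : ℝ} (hab : a ≤ b)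
    (hc : ContinuousOn φ (Icc a b)) (hd : ∀ y ∈ Ioo a b, HasDerivAt φ 0 y) : φ b = φ a := by
  rcases hab.eq_or_lt with rfl | hab
  · rfl
  obtain ⟨c, -, hslope⟩ := exists_hasDerivAt_eq_slope φ (fun _ => 0) hab hc hd
  rw [eq_comm, div_eq_zero_iff, sub_eq_zero] at hslope
  exact hslope.resolve_right (sub_ne_zero.2 hab.ne')

section

variable {F G f g : ℝ → ℝ}

theorem survival_pos_of_nonneg (hF0 : F 0 = 0) (hFbar : ∀ t, 0 < t → 0 < 1 - F t) {t : ℝ}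
    (ht : 0 ≤ t) : 0 < 1 - F t := by
  rcases ht.eq_or_lt with rfl | ht
  · simp [hF0]
  · exact hFbar t ht

theorem continuousOn_div_survival (hgc : Continuous g) (hFc : Continuous F) (hF0 : F 0 = 0)
    (hFbar : ∀ t, 0 < t → 0 < 1 - F t) : ContinuousOn (fun t => g t / (1 - F t)) (Ici 0) :=
  hgc.continuousOn.div (continuous_const.sub hFc).continuousOn
    fun _ ht => (survival_pos_of_nonneg hF0 hFbar ht).ne'

theorem intervalIntegrable_div_survival (hgc : Continuous g) (hFc : Continuous F)
    (hF0 : F 0 = 0) (hFbar : ∀ t, 0 < t → 0 < 1 - F t) {x : ℝ} (hx : 0 ≤ x) :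
    IntervalIntegrable (fun t => g t / (1 - F t)) volume 0 x :=
  ((continuousOn_div_survival hgc hFc hF0 hFbar).mono
    (by rw [uIcc_of_le hx]; exact Icc_subset_Ici_self)).intervalIntegrable

theorem relevationIntegral_pos (hgc : Continuous g) (hFc : Continuous F) (hF0 : F 0 = 0)
    (hFbar : ∀ t, 0 < t → 0 < 1 - F t) (hgpos : ∀ t, 0 < t → 0 < g t) {x : ℝ} (hx : 0 < x) :
    0 < relevationIntegral F g x :=
  intervalIntegral_pos_of_pos_on (intervalIntegrable_div_survival hgc hFc hF0 hFbar hx.le)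
    (fun t ht => div_pos (hgpos t ht.1) (hFbar t ht.1)) hx

theorem hasDerivAt_relevationIntegral (hgc : Continuous g) (hFc : Continuous F) (hF0 : F 0 = 0)
    (hFbar : ∀ t, 0 < t → 0 < 1 - F t) {y : ℝ} (hy : 0 < y) :
    HasDerivAt (relevationIntegral F g) (g y / (1 - F y)) y :=
  have hc := (continuousOn_div_survival hgc hFc hF0 hFbar).mono Ioi_subset_Ici_self
  integral_hasDerivAt_right (intervalIntegrable_div_survival hgc hFc hF0 hFbar hy.le)
    (hc.stronglyMeasurableAtFilter isOpen_Ioi y hy) (hc.continuousAt (Ioi_mem_nhds hy))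

theorem hasDerivAt_survival_mul_relevationIntegral (hgc : Continuous g) (hFc : Continuous F)
    (hF0 : F 0 = 0) (hFbar : ∀ t, 0 < t → 0 < 1 - F t) {y : ℝ} (hy : 0 < y)
    (hFy : HasDerivAt F (f y) y) :
    HasDerivAt (fun x => (1 - F x) * relevationIntegral F g x)
      (g y - f y * relevationIntegral F g y) y := by
  refine ((hFy.const_sub 1).mul
    (hasDerivAt_relevationIntegral hgc hFc hF0 hFbar hy)).congr_deriv ?_
  field_simp [(hFbar y hy).ne']
  ring

theorem hasDerivAt_relevation (hgc : Continuous g) (hFc : Continuous F) (hF0 : F 0 = 0)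
    (hFbar : ∀ t, 0 < t → 0 < 1 - F t) {y : ℝ} (hy : 0 < y) (hFy : HasDerivAt F (f y) y)
    (hGy : HasDerivAt G (g y) y) :
    HasDerivAt (relevation F G g) (-(f y * relevationIntegral F g y)) y := by
  refine ((hGy.const_sub 1).add
    (hasDerivAt_survival_mul_relevationIntegral hgc hFc hF0 hFbar hy hFy)).congr_deriv ?_
  ring

theorem density_mul_relevationIntegral_eq_of_relevation_comm (hfc : Continuous f)
    (hgc : Continuous g) (hFc : Continuous F) (hGc : Continuous G) (hF0 : F 0 = 0)
    (hG0 : G 0 = 0) (hFbar : ∀ t, 0 < t → 0 < 1 - F t) (hGbar : ∀ t, 0 < t → 0 < 1 - G t)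
    (hF : ∀ x, 0 < x → HasDerivAt F (f x) x) (hG : ∀ x, 0 < x → HasDerivAt G (g x) x)
    (hcomm : ∀ x, 0 < x → relevation F G g x = relevation G F f x) {y : ℝ} (hy : 0 < y) :
    f y * relevationIntegral F g y = g y * relevationIntegral G f y := by
  have hev : relevation F G g =ᶠ[𝓝 y] relevation G F f :=
    eventually_of_mem (Ioi_mem_nhds hy) hcomm
  have h := (hasDerivAt_relevation hgc hFc hF0 hFbar hy (hF y hy) (hG y hy)).unique
    ((hasDerivAt_relevation hfc hGc hG0 hGbar hy (hG y hy) (hF y hy)).congr_of_eventuallyEq hev)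
  exact neg_inj.1 h

theorem exists_survival_mul_relevationIntegral_eq_const_mul (hfc : Continuous f)
    (hgc : Continuous g) (hFc : Continuous F) (hGc : Continuous G) (hF0 : F 0 = 0)
    (hG0 : G 0 = 0) (hFbar : ∀ t, 0 < t → 0 < 1 - F t) (hGbar : ∀ t, 0 < t → 0 < 1 - G t)
    (hF : ∀ x, 0 < x → HasDerivAt F (f x) x) (hG : ∀ x, 0 < x → HasDerivAt G (g x) x)
    (hfpos : ∀ x, 0 < x → 0 < f x) (hgpos : ∀ x, 0 < x → 0 < g x)
    (hcomm : ∀ x, 0 < x → relevation F G g x = relevation G F f x) :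
    ∃ θ, 0 < θ ∧ ∀ y, 0 < y →
      (1 - F y) * relevationIntegral F g y = θ * ((1 - G y) * relevationIntegral G f y) := by
  set I := relevationIntegral F g
  set J := relevationIntegral G f
  have hI : ∀ y, 0 < y → 0 < I y := fun y hy =>
    relevationIntegral_pos hgc hFc hF0 hFbar hgpos hy
  have hJ : ∀ y, 0 < y → 0 < J y := fun y hy =>
    relevationIntegral_pos hfc hGc hG0 hGbar hfpos hy
  set q : ℝ → ℝ := fun x => (1 - F x) * I x / ((1 - G x) * J x)
  have hq : ∀ y, 0 < y → HasDerivAt q 0 y := by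
    intro y hy
    refine ((hasDerivAt_survival_mul_relevationIntegral hgc hFc hF0 hFbar hy (hF y hy)).div
      (hasDerivAt_survival_mul_relevationIntegral hfc hGc hG0 hGbar hy (hG y hy))
      (mul_pos (hGbar y hy) (hJ y hy)).ne').congr_deriv ?_
    have hc := hcomm y hy
    rw [relevation, relevation] at hc
    rw [div_eq_zero_iff]
    left
    linear_combination f y * I y * hc - (1 - G y + (1 - F y) * I y) *
      density_mul_relevationIntegral_eq_of_relevation_comm hfc hgc hFc hGc hF0 hG0 hFbar hGbar
        hF hG hcomm hy
  have hconst : ∀ y, 0 < y → q y = q 1 := fun y hy =>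
    isOpen_Ioi.is_const_of_deriv_eq_zero isPreconnected_Ioi
      (fun z hz => (hq z hz).differentiableAt.differentiableWithinAt)
      (fun z hz => (hq z hz).deriv) hy (mem_Ioi.2 one_pos)
  refine ⟨q 1, div_pos (mul_pos (hFbar 1 one_pos) (hI 1 one_pos))
    (mul_pos (hGbar 1 one_pos) (hJ 1 one_pos)), fun y hy => ?_⟩
  rw [← hconst y hy, div_mul_cancel₀ _ (mul_pos (hGbar y hy) (hJ y hy)).ne']

theorem exists_hazard_ratio_of_relevation_comm (hfc : Continuous f)
    (hgc : Continuous g) (hFc : Continuous F) (hGc : Continuous G) (hF0 : F 0 = 0)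
    (hG0 : G 0 = 0) (hFbar : ∀ t, 0 < t → 0 < 1 - F t) (hGbar : ∀ t, 0 < t → 0 < 1 - G t)
    (hF : ∀ x, 0 < x → HasDerivAt F (f x) x) (hG : ∀ x, 0 < x → HasDerivAt G (g x) x)
    (hfpos : ∀ x, 0 < x → 0 < f x) (hgpos : ∀ x, 0 < x → 0 < g x)
    (hcomm : ∀ x, 0 < x → relevation F G g x = relevation G F f x) :
    ∃ θ, 0 < θ ∧ ∀ y, 0 < y → g y * (1 - F y) = θ * (f y * (1 - G y)) := by
  obtain ⟨θ, hθ, hratio⟩ := exists_survival_mul_relevationIntegral_eq_const_mul hfc hgc hFc hGc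
    hF0 hG0 hFbar hGbar hF hG hfpos hgpos hcomm
  refine ⟨θ, hθ, fun y hy => mul_left_cancel₀
    (relevationIntegral_pos hgc hFc hF0 hFbar hgpos hy).ne' ?_⟩
  linear_combination g y * hratio y hy - θ * (1 - G y) *
    density_mul_relevationIntegral_eq_of_relevation_comm hfc hgc hFc hGc hF0 hG0 hFbar hGbar
      hF hG hcomm hy

theorem survival_eq_rpow_of_hazard_ratio (hFc : Continuous F) (hGc : Continuous G)
    (hF0 : F 0 = 0) (hG0 : G 0 = 0) (hFbar : ∀ t, 0 < t → 0 < 1 - F t)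
    (hGbar : ∀ t, 0 < t → 0 < 1 - G t) (hF : ∀ x, 0 < x → HasDerivAt F (f x) x)
    (hG : ∀ x, 0 < x → HasDerivAt G (g x) x) {θ : ℝ}
    (hθ : ∀ y, 0 < y → g y * (1 - F y) = θ * (f y * (1 - G y))) {x : ℝ} (hx : 0 < x) :
    1 - G x = (1 - F x) ^ θ := by
  set φ : ℝ → ℝ := fun z => Real.log (1 - G z) - θ * Real.log (1 - F z)
  have hφc : ContinuousOn φ (Icc 0 x) :=
    ((continuous_const.sub hGc).continuousOn.log
      fun t ht => (survival_pos_of_nonneg hG0 hGbar ht.1).ne').sub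
    (continuousOn_const.mul ((continuous_const.sub hFc).continuousOn.log
      fun t ht => (survival_pos_of_nonneg hF0 hFbar ht.1).ne'))
  have hφd : ∀ y ∈ Ioo 0 x, HasDerivAt φ 0 y := by
    intro y ⟨hy, _⟩
    refine ((((hG y hy).const_sub 1).log (hGbar y hy).ne').sub
      ((((hF y hy).const_sub 1).log (hFbar y hy).ne').const_mul θ)).congr_deriv ?_
    field_simp [(hFbar y hy).ne', (hGbar y hy).ne']
    linear_combination -hθ y hy
  have h := eq_of_hasDerivAt_zero hx.le hφc hφd
  simp only [φ, hF0, hG0, sub_zero, Real.log_one, mul_zero] at h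
  rw [Real.rpow_def_of_pos (hFbar x hx), mul_comm, ← sub_eq_zero.1 h,
    Real.exp_log (hGbar x hx)]

theorem density_eq_of_survival_eq_rpow {θ : ℝ} (hPH : ∀ x, 0 < x → 1 - G x = (1 - F x) ^ θ)
    {y : ℝ} (hy : 0 < y) (hFbar : 0 < 1 - F y) (hFy : HasDerivAt F (f y) y)
    (hGy : HasDerivAt G (g y) y) : g y = θ * (1 - F y) ^ (θ - 1) * f y := by
  have hev : G =ᶠ[𝓝 y] fun z => 1 - (1 - F z) ^ θ := by
    filter_upwards [Ioi_mem_nhds hy] with z hz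
    linarith [hPH z hz]
  have hPHy := ((hFy.const_sub 1).rpow_const (p := θ) (Or.inl hFbar.ne')).const_sub 1
  rw [hGy.unique (hPHy.congr_of_eventuallyEq hev)]
  ring

theorem integral_comp_survival_mul_density (hfc : Continuous f) (hFc : Continuous F)
    (hF0 : F 0 = 0) (hFbar : ∀ t, 0 < t → 0 < 1 - F t) (hF : ∀ x, 0 < x → HasDerivAt F (f x) x)
    {φ : ℝ → ℝ} (hφ : ContinuousOn φ (Ioi 0)) {x : ℝ} (hx : 0 ≤ x) :
    ∫ t in (0:ℝ)..x, φ (1 - F t) * f t = ∫ u in (1 - F x)..1, φ u := by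
  have h := integral_comp_mul_deriv'' (f := fun t => 1 - F t) (f' := fun t => -f t) (g := φ)
    (continuous_const.sub hFc).continuousOn
    (fun t ht => ((hF t ((le_min le_rfl hx).trans_lt ht.1)).const_sub 1).hasDerivWithinAt)
    hfc.neg.continuousOn
    (hφ.mono (by
      rintro _ ⟨t, ht, rfl⟩
      rw [uIcc_of_le hx] at ht
      exact survival_pos_of_nonneg hF0 hFbar ht.1))
  simp only [Function.comp_def, mul_neg, intervalIntegral.integral_neg, hF0, sub_zero] at h
  rw [integral_symm 1 (1 - F x), ← h, neg_neg]

theorem rpow_add_mul_integral_rpow_comm {s : ℝ} (hs : 0 < s) (θ : ℝ) :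
    s ^ θ + s * ∫ u in s..1, θ * u ^ (θ - 2) = s + s ^ θ * ∫ u in s..1, u ^ (-θ) := by
  rcases eq_or_ne θ 1 with rfl | hθ
  · norm_num
  have h0 : (0:ℝ) ∉ uIcc s 1 := notMem_uIcc_of_lt hs one_pos
  have hθ₁ : θ - 1 ≠ 0 := sub_ne_zero.2 hθ
  have hθ₂ : 1 - θ ≠ 0 := sub_ne_zero.2 hθ.symm
  rw [intervalIntegral.integral_const_mul,
    integral_rpow (Or.inr ⟨fun h => hθ₁ (by linarith), h0⟩),
    integral_rpow (Or.inr ⟨fun h => hθ₂ (by linarith), h0⟩), Real.one_rpow, Real.one_rpow,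
    show θ - 2 + 1 = θ - 1 by ring, show -θ + 1 = 1 - θ by ring, Real.rpow_sub_one hs.ne',
    Real.rpow_sub hs, Real.rpow_one]
  have hsθ : s ^ θ ≠ 0 := (Real.rpow_pos_of_pos hs θ).ne'
  field_simp
  ring

theorem relevation_comm_of_survival_eq_rpow (hfc : Continuous f) (hFc : Continuous F)
    (hF0 : F 0 = 0) (hFbar : ∀ t, 0 < t → 0 < 1 - F t) (hF : ∀ x, 0 < x → HasDerivAt F (f x) x)
    (hG : ∀ x, 0 < x → HasDerivAt G (g x) x) {θ : ℝ}
    (hPH : ∀ x, 0 < x → 1 - G x = (1 - F x) ^ θ) {x : ℝ} (hx : 0 < x) :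
    relevation F G g x = relevation G F f x := by
  have hI : relevationIntegral F g x = ∫ u in (1 - F x)..1, θ * u ^ (θ - 2) := by
    rw [← integral_comp_survival_mul_density hfc hFc hF0 hFbar hF
      (φ := fun u => θ * u ^ (θ - 2))
      (continuousOn_const.mul (continuousOn_id.rpow_const fun u hu => Or.inl (ne_of_gt hu)))
      hx.le]
    refine integral_congr_ae (ae_of_all _ fun t ht => ?_)
    rw [uIoc_of_le hx.le] at ht
    have hFt := hFbar t ht.1
    rw [density_eq_of_survival_eq_rpow hPH ht.1 hFt (hF t ht.1) (hG t ht.1),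
      Real.rpow_sub_one hFt.ne', Real.rpow_sub hFt, Real.rpow_two]
    field_simp
  have hJ : relevationIntegral G f x = ∫ u in (1 - F x)..1, u ^ (-θ) := by
    rw [← integral_comp_survival_mul_density hfc hFc hF0 hFbar hF (φ := fun u => u ^ (-θ))
      (continuousOn_id.rpow_const fun u hu => Or.inl (ne_of_gt hu)) hx.le]
    refine integral_congr_ae (ae_of_all _ fun t ht => ?_)
    rw [uIoc_of_le hx.le] at ht
    have hFt := hFbar t ht.1
    rw [hPH t ht.1, Real.rpow_neg hFt.le]
    field_simp
  rw [relevation, relevation, hI, hJ, hPH x hx]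
  exact rpow_add_mul_integral_rpow_comm (hFbar x hx) θ

end

theorem relevation_comm_iff_phr_general
    (F G f g : ℝ → ℝ)
    (hfC : ContDiff ℝ 1 f) (hgC : ContDiff ℝ 1 g)
    (hfpos : ∀ x, 0 < x → 0 < f x) (hgpos : ∀ x, 0 < x → 0 < g x)
    (hf : ∀ x, 0 < x → HasDerivAt F (f x) x)
    (hg : ∀ x, 0 < x → HasDerivAt G (g x) x)
    (hFcont : Continuous F) (hGcont : Continuous G)
    (hF0 : F 0 = 0) (hG0 : G 0 = 0)
    (hFbarpos : ∀ t, 0 < t → 0 < 1 - F t) (hGbarpos : ∀ t, 0 < t → 0 < 1 - G t) :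
    (∀ x, 0 < x →
        (1 - G x) + (1 - F x) * ∫ t in (0:ℝ)..x, g t / (1 - F t)
          = (1 - F x) + (1 - G x) * ∫ t in (0:ℝ)..x, f t / (1 - G t))
      ↔ ∃ θ : ℝ, 0 < θ ∧ ∀ x, 0 < x → 1 - G x = (1 - F x) ^ θ := by
  constructor
  · intro hcomm
    obtain ⟨θ, hθ, hazard⟩ := exists_hazard_ratio_of_relevation_comm hfC.continuous
      hgC.continuous hFcont hGcont hF0 hG0 hFbarpos hGbarpos hf hg hfpos hgpos hcomm
    exact ⟨θ, hθ, fun x hx => survival_eq_rpow_of_hazard_ratio hFcont hGcont hF0 hG0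
      hFbarpos hGbarpos hf hg hazard hx⟩
  · rintro ⟨θ, -, hPH⟩ x hx
    exact relevation_comm_of_survival_eq_rpow hfC.continuous hFcont hF0 hFbarpos hf hg hPH hx

/-- The relevation transform is commutative, `Ḡ#F̄(x) = F̄#Ḡ(x)` for all
`x > 0`, if and only if `X` and `Y` satisfy the proportional hazards rate model, i.e.
there is `θ > 0` with `1 - G x = (1 - F x)^θ` for all `x > 0`. -/
theorem relevation_comm_iff_phr
    (F G f g : ℝ → ℝ)
    (hfC : ContDiff ℝ 1 f) (hgC : ContDiff ℝ 1 g)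
    (hfpos : ∀ x, 0 < x → 0 < f x) (hgpos : ∀ x, 0 < x → 0 < g x)
    (hf : ∀ x, 0 < x → HasDerivAt F (f x) x)
    (hg : ∀ x, 0 < x → HasDerivAt G (g x) x)
    (hFcont : Continuous F) (hGcont : Continuous G)
    (hF0 : F 0 = 0) (hG0 : G 0 = 0)
    (hFbarpos : ∀ t, 0 < t → 0 < 1 - F t) (hGbarpos : ∀ t, 0 < t → 0 < 1 - G t)
    (hint1 : ∀ x, 0 < x → IntervalIntegrable (fun t => g t / (1 - F t)) volume 0 x)
    (hint2 : ∀ x, 0 < x → IntervalIntegrable (fun t => f t / (1 - G t)) volume 0 x) :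
    (∀ x, 0 < x →
        (1 - G x) + (1 - F x) * ∫ t in (0:ℝ)..x, g t / (1 - F t)
          = (1 - F x) + (1 - G x) * ∫ t in (0:ℝ)..x, f t / (1 - G t))
      ↔ ∃ θ : ℝ, 0 < θ ∧ ∀ x, 0 < x → 1 - G x = (1 - F x) ^ θ :=
  relevation_comm_iff_phr_general F G f g hfC hgC hfpos hgpos hf hg hFcont hGcont hF0 hG0 hFbarpos
    hGbarpos
end

section
/- Let X be an absolutely continuous nonnegative random variable with differentiable pdf f and cdf F with F(x) > 0 for all x > 0, and define the sequence of pdfs f_1 = f, f_{n+1}(x) = T_n(x)·f_n(x), where F_1 = F, T_n(x) = −log F_n(x) and F_{n+1}(x) = F_n(x)(1 + T_n(x)). Fix n ≥ 1 and suppose X_n is ILR, i.e. f_n is log-concave on its support. Then X_n ≥_{lr↑} X_{n+1}: for every t ≥ 0, the function x ↦ f_{n+1}(x + t)/f_n(x) is decreasing in x > 0. -/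
open MeasureTheory Set Filter

private lemma concave_shift' {φ : ℝ → ℝ} (hφ : ConcaveOn ℝ (Set.Ioi 0) φ) {t x y : ℝ}
    (ht : 0 ≤ t) (hx : 0 < x) (hxy : x ≤ y) :
    φ (y + t) - φ y ≤ φ (x + t) - φ x := by
  rcases eq_or_lt_of_le hxy with rfl | hlt
  · simp
  · have hd : 0 < y + t - x := by linarith
    set d := y + t - x with hdd
    have ha : 0 ≤ (y - x) / d := div_nonneg (by linarith) hd.le
    have hb : 0 ≤ t / d := div_nonneg ht hd.le
    have hab : (y - x) / d + t / d = 1 := by field_simp; linarith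
    have hxm : x ∈ Set.Ioi (0:ℝ) := hx
    have hym : y + t ∈ Set.Ioi (0:ℝ) := Set.mem_Ioi.2 (by linarith)
    have h1 := hφ.2 hxm hym hb ha (by linarith)
    have h2 := hφ.2 hxm hym ha hb hab
    simp only [smul_eq_mul] at h1 h2
    have e1 : t / d * x + (y - x) / d * (y + t) = y := by field_simp; ring
    have e2 : (y - x) / d * x + t / d * (y + t) = x + t := by field_simp; ring
    rw [e1] at h1
    rw [e2] at h2
    have e3 : ((y - x) / d + t / d) * φ x = φ x := by rw [hab, one_mul]
    have e4 : ((y - x) / d + t / d) * φ (y + t) = φ (y + t) := by rw [hab, one_mul]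
    linarith [h1, h2, e3, e4]

private lemma Fn_props' (F : ℝ → ℝ) (Fn : ℕ → ℝ → ℝ)
    (hFmono : Monotone F) (hFpos : ∀ x, 0 < x → 0 < F x) (hFle : ∀ x, F x ≤ 1)
    (hF1 : ∀ x, Fn 1 x = F x)
    (hFrec : ∀ m, 1 ≤ m → ∀ x, Fn (m + 1) x = Fn m x * (1 + (-Real.log (Fn m x)))) :
    ∀ m, 1 ≤ m → ∀ x y : ℝ, 0 < x → x ≤ y →
      0 < Fn m x ∧ Fn m x ≤ 1 ∧ Fn m x ≤ Fn m y := by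
  intro m hm
  induction m, hm using Nat.le_induction with
  | base =>
    intro x y hx hxy
    rw [hF1, hF1]
    exact ⟨hFpos x hx, hFle x, hFmono hxy⟩
  | succ m hm ih =>
    intro x y hx hxy
    obtain ⟨hux, hux1, huxy⟩ := ih x y hx hxy
    obtain ⟨hvy, hvy1, -⟩ := ih y y (lt_of_lt_of_le hx hxy) le_rfl
    rw [hFrec m hm x, hFrec m hm y]
    set u := Fn m x
    set v := Fn m y
    have hlu : Real.log u ≤ 0 := Real.log_nonpos hux.le hux1
    have hlv : Real.log v ≤ 0 := Real.log_nonpos hvy.le hvy1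
    refine ⟨mul_pos hux (by linarith), ?_, ?_⟩
    · have h := Real.log_le_sub_one_of_pos (inv_pos.2 hux)
      rw [Real.log_inv] at h
      have h2 : u * (-Real.log u) ≤ u * (u⁻¹ - 1) := mul_le_mul_of_nonneg_left h hux.le
      have h3 : u * u⁻¹ = 1 := mul_inv_cancel₀ hux.ne'
      nlinarith
    · have h := Real.log_le_sub_one_of_pos (div_pos hvy hux)
      rw [Real.log_div hvy.ne' hux.ne'] at h
      have h2 : u * (Real.log v - Real.log u) ≤ u * (v / u - 1) :=
        mul_le_mul_of_nonneg_left h hux.le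
      have h3 : u * (v / u) = v := by field_simp
      nlinarith [mul_nonneg (sub_nonneg.2 huxy) (neg_nonneg.2 hlv)]

/-- Fix `n ≥ 1` and suppose `X_n` is ILR, i.e. `f_n` is log-concave on its
support `(0,∞)`. Then `X_n ≥_{lr↑} X_{n+1}`: for every `t ≥ 0`, the map
`x ↦ f_{n+1}(x + t) / f_n(x)` is decreasing on `(0,∞)`. -/
theorem seq_up_shifted_likelihood_ratio
    (F f : ℝ → ℝ) (Fn fn : ℕ → ℝ → ℝ) (n : ℕ) (hn : 1 ≤ n)
    (hf : ∀ x, 0 ≤ f x)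
    (hderiv : ∀ x, 0 < x → HasDerivAt F (f x) x)
    (hFmono : Monotone F)
    (hFpos : ∀ x, 0 < x → 0 < F x)
    (hFle : ∀ x, F x ≤ 1)
    (hF1 : ∀ x, Fn 1 x = F x)
    (hf1 : ∀ x, fn 1 x = f x)
    (hFrec : ∀ m, 1 ≤ m → ∀ x, Fn (m + 1) x = Fn m x * (1 + (-Real.log (Fn m x))))
    (hfrec : ∀ m, 1 ≤ m → ∀ x, fn (m + 1) x = (-Real.log (Fn m x)) * fn m x)
    (hfnpos : ∀ x, 0 < x → 0 < fn n x)
    (hILR : ConcaveOn ℝ (Ioi 0) (fun x => Real.log (fn n x))) :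
    ∀ t : ℝ, 0 ≤ t →
      AntitoneOn (fun x => fn (n + 1) (x + t) / fn n x) (Ioi 0) := by
  intro t ht x hx y hy hxy
  have hprops := Fn_props' F Fn hFmono hFpos hFle hF1 hFrec n hn
  have hx0 : (0:ℝ) < x := hx
  have hy0 : (0:ℝ) < y := hy
  have hxt : 0 < x + t := by linarith
  have hyt : 0 < y + t := by linarith
  obtain ⟨hFxt_pos, hFxt_le, hFm⟩ := hprops (x + t) (y + t) hxt (by linarith)
  obtain ⟨hFyt_pos, hFyt_le, -⟩ := hprops (y + t) (y + t) hyt le_rfl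
  have hTyt : 0 ≤ -Real.log (Fn n (y + t)) :=
    neg_nonneg.2 (Real.log_nonpos hFyt_pos.le hFyt_le)
  have hT_le : -Real.log (Fn n (y + t)) ≤ -Real.log (Fn n (x + t)) := by
    have := Real.log_le_log hFxt_pos hFm
    linarith
  have hfx := hfnpos x hx0
  have hfy := hfnpos y hy0
  have hfxt := hfnpos (x + t) hxt
  have hfyt := hfnpos (y + t) hyt
  have hshift := concave_shift' hILR ht hx0 hxy
  have hratio : fn n (y + t) / fn n y ≤ fn n (x + t) / fn n x := by
    have h1 : Real.log (fn n (y + t) / fn n y) ≤ Real.log (fn n (x + t) / fn n x) := by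
      rw [Real.log_div hfyt.ne' hfy.ne', Real.log_div hfxt.ne' hfx.ne']
      exact hshift
    have h2 := Real.exp_le_exp.2 h1
    rwa [Real.exp_log (div_pos hfyt hfy), Real.exp_log (div_pos hfxt hfx)] at h2
  simp only [hfrec n hn]
  rw [mul_div_assoc, mul_div_assoc]
  exact mul_le_mul hT_le hratio (le_of_lt (div_pos hfyt hfy)) (le_trans hTyt hT_le)
end

section
/- Let X be an absolutely continuous nonnegative random variable with pdf f and cdf F with F(x) > 0 for all x > 0, and define the sequence of pdfs f_1 = f, f_{n+1}(x) = T_n(x)·f_n(x), where F_1 = F, T_n(x) = −log F_n(x) and F_{n+1}(x) = F_n(x)(1 + T_n(x)). Fix n ≥ 1 and suppose X_n is DLR, i.e. f_n is log-convex on (0,∞). Then X_{n+1} is DLR, i.e. f_{n+1} is log-convex on (0,∞). -/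
/-!
If `f_n` is log-convex and `F_n` is bounded, then `f_n` is decreasing (otherwise `F_n` would grow
at least linearly), hence so is the reversed hazard rate `v = f_n / F_n`. Therefore
`T_n = -log F_n`, whose derivative is `-v`, is convex, and `log v = log f_n + T_n` is convex.
The heart of the matter is that a positive `T` with log-convex `-T' = v` is itself log-convex
(morally `T x = c + ∫_x^∞ v`): the exponential through `(x, v x)` and `(y, v y)` lies above `v`
on `[x, y]` and below it on `[y, ∞)`, and comparing `T` with a primitive of it gives
`v y * T x ≤ v x * T y`, i.e. `T' / T` is increasing. Finally `log f_{n+1} = log T_n + log f_n`.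
-/

open Set Filter Real Topology

lemma monotoneOn_of_hasDerivAt_nonneg {D : Set ℝ} (hD : Convex ℝ D) {f f' : ℝ → ℝ}
    (hf : ∀ x ∈ D, HasDerivAt f (f' x) x) (hf' : ∀ x ∈ interior D, 0 ≤ f' x) :
    MonotoneOn f D :=
  monotoneOn_of_hasDerivWithinAt_nonneg hD (fun x hx => (hf x hx).continuousAt.continuousWithinAt)
    (fun x hx => (hf x (interior_subset hx)).hasDerivWithinAt) hf'

lemma antitoneOn_of_hasDerivAt_nonpos {D : Set ℝ} (hD : Convex ℝ D) {f f' : ℝ → ℝ}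
    (hf : ∀ x ∈ D, HasDerivAt f (f' x) x) (hf' : ∀ x ∈ interior D, f' x ≤ 0) :
    AntitoneOn f D :=
  antitoneOn_of_hasDerivWithinAt_nonpos hD (fun x hx => (hf x hx).continuousAt.continuousWithinAt)
    (fun x hx => (hf x (interior_subset hx)).hasDerivWithinAt) hf'

lemma MonotoneOn.convexOn_of_hasDerivAt {D : Set ℝ} (hD : Convex ℝ D) {f f' : ℝ → ℝ}
    (hf : ∀ x ∈ D, HasDerivAt f (f' x) x) (hf' : MonotoneOn f' D) : ConvexOn ℝ D f :=
  MonotoneOn.convexOn_of_deriv hD (fun x hx => (hf x hx).continuousAt.continuousWithinAt)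
    (fun x hx => (hf x (interior_subset hx)).differentiableAt.differentiableWithinAt)
    ((hf'.mono interior_subset).congr fun x hx => ((hf x (interior_subset hx)).deriv).symm)

lemma ConvexOn.le_add_slope_mul {s : Set ℝ} {f : ℝ → ℝ} (hf : ConvexOn ℝ s f)
    {x y t : ℝ} (hx : x ∈ s) (hy : y ∈ s) (ht : t ∈ s) (hxt : x < t) (hty : t ≤ y) :
    f t ≤ f x + slope f x y * (t - x) := by
  have h := hf.monotoneOn_slope_gt hx ⟨ht, hxt⟩ ⟨hy, hxt.trans_le hty⟩ hty
  rw [slope_def_field f x t, div_le_iff₀ (sub_pos.2 hxt)] at h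
  linarith

lemma ConvexOn.add_slope_mul_le {s : Set ℝ} {f : ℝ → ℝ} (hf : ConvexOn ℝ s f)
    {x y t : ℝ} (hx : x ∈ s) (hy : y ∈ s) (ht : t ∈ s) (hxy : x < y) (hyt : y ≤ t) :
    f x + slope f x y * (t - x) ≤ f t := by
  have h := hf.monotoneOn_slope_gt hx ⟨hy, hxy⟩ ⟨ht, hxy.trans_le hyt⟩ hyt
  rw [slope_def_field f x t, le_div_iff₀ (sub_pos.2 (hxy.trans_le hyt))] at h
  linarith

theorem strictAntiOn_of_hasDerivAt_of_convexOn_log {a : ℝ} {Φ φ : ℝ → ℝ}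
    (hΦ : ∀ x ∈ Ioi a, HasDerivAt Φ (φ x) x) (hΦ_bdd : BddAbove (Φ '' Ioi a))
    (hφ : ∀ x ∈ Ioi a, 0 < φ x) (hφ_conv : ConvexOn ℝ (Ioi a) fun x => log (φ x)) :
    StrictAntiOn φ (Ioi a) := by
  intro x hx y hy hxy
  by_contra! hle
  obtain ⟨C, hC⟩ := hΦ_bdd
  have hIci : Ici y ⊆ Ioi a := Ici_subset_Ioi.2 hy
  have hy_le : ∀ t ∈ Ici y, φ y ≤ φ t := fun t ht =>
    (log_le_log_iff (hφ y hy) (hφ t (hIci ht))).1 <|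
      hφ_conv.le_right_of_left_le'' hx (hIci ht) hxy ht <|
        log_le_log (hφ x hx) hle
  have hlin : MonotoneOn (fun t => Φ t - φ y * t) (Ici y) :=
    monotoneOn_of_hasDerivAt_nonneg (f' := fun t => φ t - φ y) (convex_Ici y)
      (fun t ht => ((hΦ t (hIci ht)).sub ((hasDerivAt_id t).const_mul (φ y))).congr_deriv
        (by simp))
      (fun t ht => by rw [interior_Ici] at ht; simpa using hy_le t (mem_Ici.2 ht.le))
  set z := y + (C - Φ y + 1) / φ y
  have hΦy : Φ y ≤ C := hC (mem_image_of_mem Φ hy)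
  have hyz : y ≤ z := le_add_of_nonneg_right (div_nonneg (by linarith) (hφ y hy).le)
  have hΦz : Φ z ≤ C := hC (mem_image_of_mem Φ (hIci hyz))
  have hstep : φ y * (z - y) = C - Φ y + 1 := by
    simp only [z, add_sub_cancel_left]
    field_simp [(hφ y hy).ne']
  have h := hlin self_mem_Ici hyz hyz
  simp only at h
  linarith

theorem convexOn_neg_log_of_hasDerivAt_of_convexOn_log {a : ℝ} {G g : ℝ → ℝ}
    (hG : ∀ x ∈ Ioi a, HasDerivAt G (g x) x) (hG_pos : ∀ x ∈ Ioi a, 0 < G x)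
    (hG_bdd : BddAbove (G '' Ioi a)) (hg : ∀ x ∈ Ioi a, 0 < g x)
    (hg_conv : ConvexOn ℝ (Ioi a) fun x => log (g x)) :
    ConvexOn ℝ (Ioi a) fun x => -log (G x) := by
  have hg_anti := strictAntiOn_of_hasDerivAt_of_convexOn_log hG hG_bdd hg hg_conv
  have hG_mono : MonotoneOn G (Ioi a) :=
    monotoneOn_of_hasDerivAt_nonneg (convex_Ioi a) hG fun x hx => (hg x (interior_subset hx)).le
  refine MonotoneOn.convexOn_of_hasDerivAt (f' := fun x => -(g x / G x)) (convex_Ioi a)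
    (fun x hx => ((hG x hx).log (hG_pos x hx).ne').fun_neg) ?_
  intro x hx y hy hxy
  exact neg_le_neg <| div_le_div₀ (hg x hx).le (hg_anti.antitoneOn hx hy hxy) (hG_pos x hx)
    (hG_mono hx hy hxy)

lemma le_mul_exp_slope_of_convexOn_log {s : Set ℝ} {v : ℝ → ℝ} (hv : ∀ x ∈ s, 0 < v x)
    (hv_conv : ConvexOn ℝ s fun x => log (v x)) {x y t : ℝ} (hx : x ∈ s) (hy : y ∈ s)
    (ht : t ∈ s) (hxt : x < t) (hty : t ≤ y) :
    v t ≤ v x * exp (slope (fun x => log (v x)) x y * (t - x)) := by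
  rw [← exp_log (hv x hx), ← exp_add, ← log_le_iff_le_exp (hv t ht)]
  exact hv_conv.le_add_slope_mul hx hy ht hxt hty

lemma mul_exp_slope_le_of_convexOn_log {s : Set ℝ} {v : ℝ → ℝ} (hv : ∀ x ∈ s, 0 < v x)
    (hv_conv : ConvexOn ℝ s fun x => log (v x)) {x y t : ℝ} (hx : x ∈ s) (hy : y ∈ s)
    (ht : t ∈ s) (hxy : x < y) (hyt : y ≤ t) :
    v x * exp (slope (fun x => log (v x)) x y * (t - x)) ≤ v t := by
  rw [← exp_log (hv x hx), ← exp_add, ← le_log_iff_exp_le (hv t ht)]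
  exact hv_conv.add_slope_mul_le hx hy ht hxy hyt

lemma hasDerivAt_mul_exp_div {c s p : ℝ} (hs : s ≠ 0) (t : ℝ) :
    HasDerivAt (fun t => c * exp (s * (t - p)) / s) (c * exp (s * (t - p))) t :=
  ((((((hasDerivAt_id t).sub_const p).const_mul s).exp).const_mul c).div_const s).congr_deriv
    (by simp only [id, mul_one]; field_simp)

theorem sub_le_of_hasDerivAt_neg_of_le_mul_exp {T v : ℝ → ℝ} {x y p c s : ℝ} (hs : s ≠ 0)
    (hxy : x ≤ y) (hT : ∀ t ∈ Icc x y, HasDerivAt T (-v t) t)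
    (hv : ∀ t ∈ Ioo x y, v t ≤ c * exp (s * (t - p))) :
    T x - T y ≤ c * exp (s * (y - p)) / s - c * exp (s * (x - p)) / s := by
  have h := monotoneOn_of_hasDerivAt_nonneg (convex_Icc x y)
    (fun t ht => (hT t ht).add (hasDerivAt_mul_exp_div (c := c) (p := p) hs t))
    (fun t ht => by rw [interior_Icc] at ht; linarith [hv t ht])
    (left_mem_Icc.2 hxy) (right_mem_Icc.2 hxy) hxy
  simp only [Pi.add_apply] at h
  linarith

-- `T y ≥ ∫_y^∞ v ≥ ∫_y^∞ c e^{s (t - p)} dt`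
theorem mul_exp_div_neg_le_of_hasDerivAt_neg {T v : ℝ → ℝ} {y p c s : ℝ} (hs : s < 0)
    (hT : ∀ t ∈ Ici y, HasDerivAt T (-v t) t) (hT_nonneg : ∀ t ∈ Ici y, 0 ≤ T t)
    (hv : ∀ t ∈ Ioi y, c * exp (s * (t - p)) ≤ v t) :
    c * exp (s * (y - p)) / -s ≤ T y := by
  have h_anti : AntitoneOn (fun t => T t + c * exp (s * (t - p)) / s) (Ici y) :=
    antitoneOn_of_hasDerivAt_nonpos (convex_Ici y)
      (fun t ht => (hT t ht).add (hasDerivAt_mul_exp_div hs.ne t))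
      (fun t ht => by rw [interior_Ici] at ht; linarith [hv t ht])
  have h_lim : Tendsto (fun t => c * exp (s * (t - p)) / s) atTop (𝓝 0) := by
    have h : Tendsto (fun t => s * (t - p)) atTop atBot :=
      (tendsto_atTop_add_const_right atTop (-p) tendsto_id).const_mul_atTop_of_neg hs
    simpa using ((tendsto_exp_atBot.comp h).const_mul c).div_const s
  have h : 0 ≤ T y + c * exp (s * (y - p)) / s :=
    le_of_tendsto h_lim <| eventually_atTop.2 ⟨y, fun t ht => by
      have h := h_anti self_mem_Ici ht ht
      simp only at h
      linarith [hT_nonneg t ht]⟩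
  rw [div_neg]
  linarith

theorem antitoneOn_div_of_hasDerivAt_neg_of_convexOn_log {a : ℝ} {T v : ℝ → ℝ}
    (hT : ∀ x ∈ Ioi a, HasDerivAt T (-v x) x) (hT_pos : ∀ x ∈ Ioi a, 0 < T x)
    (hv : ∀ x ∈ Ioi a, 0 < v x) (hv_conv : ConvexOn ℝ (Ioi a) fun x => log (v x)) :
    AntitoneOn (fun x => v x / T x) (Ioi a) := by
  intro x hx y hy hxy
  rcases hxy.eq_or_lt with rfl | hxy
  · rfl
  have hIci : Ici y ⊆ Ioi a := Ici_subset_Ioi.2 hy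
  have hIcc : Icc x y ⊆ Ioi a := fun t ht => lt_of_lt_of_le hx ht.1
  have hv_xy : v y < v x :=
    strictAntiOn_of_hasDerivAt_of_convexOn_log (Φ := fun t => -T t)
      (fun t ht => (hT t ht).fun_neg.congr_deriv (neg_neg _))
      ⟨0, forall_mem_image.2 fun t ht => (neg_neg_of_pos (hT_pos t ht)).le⟩ hv hv_conv hx hy hxy
  set s := slope (fun t => log (v t)) x y with hs_def
  have hs : s < 0 := by
    rw [hs_def, slope_def_field]
    exact div_neg_of_neg_of_pos (sub_neg.2 (log_lt_log (hv y hy) hv_xy)) (sub_pos.2 hxy)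
  have hwy : v x * exp (s * (y - x)) = v y :=
    le_antisymm (mul_exp_slope_le_of_convexOn_log hv hv_conv hx hy hy hxy le_rfl)
      (le_mul_exp_slope_of_convexOn_log hv hv_conv hx hy hy hxy le_rfl)
  have h_diff : T x - T y ≤ (v x - v y) / -s := by
    have h := sub_le_of_hasDerivAt_neg_of_le_mul_exp hs.ne hxy.le (fun t ht => hT t (hIcc ht))
      fun t ht => le_mul_exp_slope_of_convexOn_log hv hv_conv hx hy
        (hIcc (Ioo_subset_Icc_self ht)) ht.1 ht.2.le
    rw [hwy, sub_self, mul_zero, exp_zero, mul_one] at h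
    rw [div_neg, sub_div]
    linarith
  have h_tail : v y / -s ≤ T y := by
    rw [← hwy]
    exact mul_exp_div_neg_le_of_hasDerivAt_neg hs (fun t ht => hT t (hIci ht))
      (fun t ht => (hT_pos t (hIci ht)).le) fun t ht =>
        mul_exp_slope_le_of_convexOn_log hv hv_conv hx hy (hIci (Ioi_subset_Ici_self ht)) hxy
          (mem_Ioi.1 ht).le
  rw [div_le_div_iff₀ (hT_pos y hy) (hT_pos x hx)]
  calc v y * T x = v y * (T x - T y) + v y * T y := by ring
    _ ≤ v y * ((v x - v y) / -s) + v y * T y := by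
      gcongr
      exact (hv y hy).le
    _ = (v x - v y) * (v y / -s) + v y * T y := by ring
    _ ≤ (v x - v y) * T y + v y * T y := by
      gcongr
    _ = v x * T y := by ring

theorem convexOn_log_of_hasDerivAt_neg_of_convexOn_log {a : ℝ} {T v : ℝ → ℝ}
    (hT : ∀ x ∈ Ioi a, HasDerivAt T (-v x) x) (hT_pos : ∀ x ∈ Ioi a, 0 < T x)
    (hv : ∀ x ∈ Ioi a, 0 < v x) (hv_conv : ConvexOn ℝ (Ioi a) fun x => log (v x)) :
    ConvexOn ℝ (Ioi a) fun x => log (T x) :=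
  MonotoneOn.convexOn_of_hasDerivAt (f' := fun x => -v x / T x) (convex_Ioi a)
    (fun x hx => (hT x hx).log (hT_pos x hx).ne') fun x hx y hy hxy => by
      simpa only [neg_div, neg_le_neg_iff] using
        antitoneOn_div_of_hasDerivAt_neg_of_convexOn_log hT hT_pos hv hv_conv hx hy hxy

theorem convexOn_log_neg_log_mul_of_convexOn_log {a : ℝ} {G g : ℝ → ℝ}
    (hG : ∀ x ∈ Ioi a, HasDerivAt G (g x) x) (hG_pos : ∀ x ∈ Ioi a, 0 < G x)
    (hG_le : ∀ x ∈ Ioi a, G x ≤ 1) (hg : ∀ x ∈ Ioi a, 0 < g x)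
    (hg_conv : ConvexOn ℝ (Ioi a) fun x => log (g x)) :
    ConvexOn ℝ (Ioi a) fun x => log (-log (G x) * g x) := by
  have hG_strictMono : StrictMonoOn G (Ioi a) :=
    strictMonoOn_of_hasDerivWithinAt_pos (convex_Ioi a)
      (fun x hx => (hG x hx).continuousAt.continuousWithinAt)
      (fun x hx => (hG x (interior_subset hx)).hasDerivWithinAt)
      fun x hx => hg x (interior_subset hx)
  have hT_pos : ∀ x ∈ Ioi a, 0 < -log (G x) := fun x hx =>
    have hx1 : x + 1 ∈ Ioi a := lt_trans hx (lt_add_one x)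
    neg_pos.2 <| log_neg (hG_pos x hx) <|
      (hG_strictMono hx hx1 (lt_add_one x)).trans_le (hG_le _ hx1)
  have hT : ∀ x ∈ Ioi a, HasDerivAt (fun x => -log (G x)) (-(g x / G x)) x := fun x hx =>
    ((hG x hx).log (hG_pos x hx).ne').fun_neg
  have hv_conv : ConvexOn ℝ (Ioi a) fun x => log (g x / G x) :=
    (hg_conv.add (convexOn_neg_log_of_hasDerivAt_of_convexOn_log hG hG_pos
      ⟨1, forall_mem_image.2 hG_le⟩ hg hg_conv)).congr fun x hx => by
        simp only [Pi.add_apply, log_div (hg x hx).ne' (hG_pos x hx).ne', sub_eq_add_neg]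
  refine ((convexOn_log_of_hasDerivAt_neg_of_convexOn_log hT hT_pos
    (fun x hx => div_pos (hg x hx) (hG_pos x hx)) hv_conv).add hg_conv).congr fun x hx => ?_
  simp only [Pi.add_apply, log_mul (hT_pos x hx).ne' (hg x hx).ne']

lemma mul_one_add_neg_log_le_one {u : ℝ} (hu : 0 < u) : u * (1 + -log u) ≤ 1 := by
  have h := one_sub_inv_le_log_of_pos hu
  have : u * u⁻¹ = 1 := mul_inv_cancel₀ hu.ne'
  nlinarith

lemma HasDerivAt.mul_one_add_neg_log {G : ℝ → ℝ} {g x : ℝ} (hG : HasDerivAt G g x)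
    (hGx : G x ≠ 0) :
    HasDerivAt (fun t => G t * (1 + -Real.log (G t))) (-Real.log (G x) * g) x :=
  (hG.mul ((hG.log hGx).fun_neg.const_add 1)).congr_deriv (by field_simp; ring)

theorem seq_dlr_preserved_general
    (F f : ℝ → ℝ) (Fn fn : ℕ → ℝ → ℝ) (n : ℕ) (hn : 1 ≤ n)
    (hderiv : ∀ x, 0 < x → HasDerivAt F (f x) x)
    (hFpos : ∀ x, 0 < x → 0 < F x)
    (hFle : ∀ x, F x ≤ 1)
    (hF1 : ∀ x, Fn 1 x = F x)
    (hf1 : ∀ x, fn 1 x = f x)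
    (hFrec : ∀ m, 1 ≤ m → ∀ x, Fn (m + 1) x = Fn m x * (1 + (-Real.log (Fn m x))))
    (hfrec : ∀ m, 1 ≤ m → ∀ x, fn (m + 1) x = (-Real.log (Fn m x)) * fn m x)
    (hfnpos : ∀ x, 0 < x → 0 < fn n x)
    (hDLR : ConvexOn ℝ (Ioi 0) (fun x => Real.log (fn n x))) :
    ConvexOn ℝ (Ioi 0) (fun x => Real.log (fn (n + 1) x)) := by
  have hFn : ∀ m, 1 ≤ m → ∀ x ∈ Ioi (0 : ℝ),
      0 < Fn m x ∧ Fn m x ≤ 1 ∧ HasDerivAt (Fn m) (fn m x) x := by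
    intro m hm
    induction m, hm using Nat.le_induction with
    | base =>
      intro x hx
      rw [hF1 x, hf1 x, funext hF1]
      exact ⟨hFpos x hx, hFle x, hderiv x hx⟩
    | succ m hm ih =>
      intro x hx
      obtain ⟨hpos, hle, hd⟩ := ih x hx
      rw [hFrec m hm x, hfrec m hm x, funext (hFrec m hm)]
      exact ⟨mul_pos hpos (by linarith [log_nonpos hpos.le hle]),
        mul_one_add_neg_log_le_one hpos, hd.mul_one_add_neg_log hpos.ne'⟩
  refine (convexOn_log_neg_log_mul_of_convexOn_log (fun x hx => (hFn n hn x hx).2.2)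
    (fun x hx => (hFn n hn x hx).1) (fun x hx => (hFn n hn x hx).2.1) hfnpos hDLR).congr ?_
  intro x _
  simp only [hfrec n hn x]

/-- Fix `n ≥ 1` and suppose `X_n` is DLR, i.e. `f_n` is log-convex on
`(0,∞)`. Then `X_{n+1}` is DLR, i.e. `f_{n+1}` is log-convex on `(0,∞)`. -/
theorem seq_dlr_preserved
    (F f : ℝ → ℝ) (Fn fn : ℕ → ℝ → ℝ) (n : ℕ) (hn : 1 ≤ n)
    (hf : ∀ x, 0 ≤ f x)
    (hderiv : ∀ x, 0 < x → HasDerivAt F (f x) x)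
    (hFmono : Monotone F)
    (hFpos : ∀ x, 0 < x → 0 < F x)
    (hFle : ∀ x, F x ≤ 1)
    (hF1 : ∀ x, Fn 1 x = F x)
    (hf1 : ∀ x, fn 1 x = f x)
    (hFrec : ∀ m, 1 ≤ m → ∀ x, Fn (m + 1) x = Fn m x * (1 + (-Real.log (Fn m x))))
    (hfrec : ∀ m, 1 ≤ m → ∀ x, fn (m + 1) x = (-Real.log (Fn m x)) * fn m x)
    (hfnpos : ∀ x, 0 < x → 0 < fn n x)
    (hDLR : ConvexOn ℝ (Ioi 0) (fun x => Real.log (fn n x))) :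
    ConvexOn ℝ (Ioi 0) (fun x => Real.log (fn (n + 1) x)) :=
  seq_dlr_preserved_general F f Fn fn n hn hderiv hFpos hFle hF1 hf1 hFrec hfrec hfnpos hDLR
end

section
/- Let X be an absolutely continuous nonnegative random variable with pdf f and cdf F with F(x) > 0 for all x > 0. Define τ_n(x) = f_n(x)/F_n(x) where f_1 = f, F_1 = F, T_n(x) = −log F_n(x), F_{n+1}(x) = F_n(x)(1 + T_n(x)), f_{n+1}(x) = T_n(x)·f_n(x). Let q be a nonnegative function on (0,∞). If x ↦ q(x)·τ_1(x) is decreasing on (0,∞), then x ↦ q(x)·τ_n(x) is decreasing on (0,∞) for every n = 1, 2, …. -/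
open MeasureTheory Set Filter

/-- Let `q` be a nonnegative function on `(0,∞)`. If `x ↦ q(x) τ₁(x)` is
decreasing on `(0,∞)`, then `x ↦ q(x) τ_n(x)` is decreasing on `(0,∞)` for every `n ≥ 1`,
where `τ_n(x) = f_n(x)/F_n(x)`. -/
theorem seq_q_tau_decreasing
    (F f q : ℝ → ℝ) (Fn fn : ℕ → ℝ → ℝ)
    (hf : ∀ x, 0 ≤ f x)
    (hFmono : Monotone F)
    (hFpos : ∀ x, 0 < x → 0 < F x)
    (hFle : ∀ x, F x ≤ 1)
    (hF1 : ∀ x, Fn 1 x = F x)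
    (hf1 : ∀ x, fn 1 x = f x)
    (hFrec : ∀ n, 1 ≤ n → ∀ x, Fn (n + 1) x = Fn n x * (1 + (-Real.log (Fn n x))))
    (hfrec : ∀ n, 1 ≤ n → ∀ x, fn (n + 1) x = (-Real.log (Fn n x)) * fn n x)
    (hq : ∀ x, 0 < x → 0 ≤ q x)
    (hqτ : AntitoneOn (fun x => q x * (f x / F x)) (Ioi 0)) :
    ∀ n, 1 ≤ n →
      AntitoneOn (fun x => q x * (fn n x / Fn n x)) (Ioi 0) := by
  -- We prove a stronger statement by induction.
  suffices H : ∀ n, 1 ≤ n →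
      (∀ x ∈ Ioi (0:ℝ), 0 < Fn n x) ∧
      (∀ x ∈ Ioi (0:ℝ), Fn n x ≤ 1) ∧
      (∀ x ∈ Ioi (0:ℝ), 0 ≤ fn n x) ∧
      MonotoneOn (Fn n) (Ioi 0) ∧
      AntitoneOn (fun x => q x * (fn n x / Fn n x)) (Ioi 0) by
    intro n hn
    exact (H n hn).2.2.2.2
  intro n hn
  induction n, hn using Nat.le_induction with
  | base =>
    refine ⟨?_, ?_, ?_, ?_, ?_⟩
    · intro x hx; rw [hF1]; exact hFpos x hx
    · intro x _; rw [hF1]; exact hFle x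
    · intro x _; rw [hf1]; exact hf x
    · intro a _ b _ hab; rw [hF1, hF1]; exact hFmono hab
    · intro a ha b hb hab
      have := hqτ ha hb hab
      simpa [hF1, hf1] using this
  | succ n hn ih =>
    obtain ⟨hpos, hle, hfn, hmono, hanti⟩ := ih
    -- basic facts about T x = -log (Fn n x)
    have hT0 : ∀ x ∈ Ioi (0:ℝ), 0 ≤ -Real.log (Fn n x) := by
      intro x hx
      have := Real.log_nonpos (le_of_lt (hpos x hx)) (hle x hx)
      linarith
    have hTanti : ∀ a ∈ Ioi (0:ℝ), ∀ b ∈ Ioi (0:ℝ), a ≤ b →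
        -Real.log (Fn n b) ≤ -Real.log (Fn n a) := by
      intro a ha b hb hab
      have := Real.log_le_log (hpos a ha) (hmono ha hb hab)
      linarith
    have hFpos' : ∀ x ∈ Ioi (0:ℝ), 0 < Fn (n+1) x := by
      intro x hx
      rw [hFrec n hn x]
      have h1 := hT0 x hx
      have h2 := hpos x hx
      nlinarith
    refine ⟨hFpos', ?_, ?_, ?_, ?_⟩
    · -- Fn (n+1) x ≤ 1 : u*(1 - log u) ≤ 1 for 0 < u ≤ 1
      intro x hx
      rw [hFrec n hn x]
      have hu : 0 < Fn n x := hpos x hx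
      have hu1 : Fn n x ≤ 1 := hle x hx
      have hlog : Real.log (Fn n x)⁻¹ ≤ (Fn n x)⁻¹ - 1 :=
        Real.log_le_sub_one_of_pos (by positivity)
      rw [Real.log_inv] at hlog
      have : -Real.log (Fn n x) ≤ (Fn n x)⁻¹ - 1 := by linarith
      have h2 : Fn n x * (1 + (-Real.log (Fn n x))) ≤ Fn n x * (Fn n x)⁻¹ := by
        have := mul_le_mul_of_nonneg_left (by linarith : 1 + (-Real.log (Fn n x)) ≤ (Fn n x)⁻¹) hu.le
        linarith
      rw [mul_inv_cancel₀ hu.ne'] at h2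
      exact h2
    · intro x hx
      rw [hfrec n hn x]
      exact mul_nonneg (hT0 x hx) (hfn x hx)
    · -- monotonicity of Fn (n+1)
      intro a ha b hb hab
      rw [hFrec n hn a, hFrec n hn b]
      have hu : 0 < Fn n a := hpos a ha
      have hv : 0 < Fn n b := hpos b hb
      have huv : Fn n a ≤ Fn n b := hmono ha hb hab
      have hv1 : Fn n b ≤ 1 := hle b hb
      have hlogv : Real.log (Fn n b) ≤ 0 := Real.log_nonpos hv.le hv1
      -- log v - log u ≤ (v - u)/u
      have hdiv : Real.log (Fn n b / Fn n a) ≤ Fn n b / Fn n a - 1 :=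
        Real.log_le_sub_one_of_pos (by positivity)
      rw [Real.log_div hv.ne' hu.ne'] at hdiv
      have h3 : Fn n a * (Real.log (Fn n b) - Real.log (Fn n a)) ≤ Fn n b - Fn n a := by
        have h := mul_le_mul_of_nonneg_left hdiv hu.le
        have hc : Fn n a * (Fn n b / Fn n a) = Fn n b := by field_simp
        nlinarith [h, hc]
      have h4 : 0 ≤ (Fn n b - Fn n a) * (-Real.log (Fn n b)) :=
        mul_nonneg (sub_nonneg.mpr huv) (by linarith)
      nlinarith [h3, h4]
    · -- antitonicity of q * τ_{n+1}
      intro a ha b hb hab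
      have hu : 0 < Fn n a := hpos a ha
      have hv : 0 < Fn n b := hpos b hb
      have hTa := hT0 a ha
      have hTb := hT0 b hb
      have h1a : (0:ℝ) < 1 + -Real.log (Fn n a) := by linarith
      have h1b : (0:ℝ) < 1 + -Real.log (Fn n b) := by linarith
      have keya : q a * (fn (n+1) a / Fn (n+1) a)
          = (q a * (fn n a / Fn n a)) * (-Real.log (Fn n a) / (1 + -Real.log (Fn n a))) := by
        rw [hFrec n hn a, hfrec n hn a]
        field_simp
      have keyb : q b * (fn (n+1) b / Fn (n+1) b)
          = (q b * (fn n b / Fn n b)) * (-Real.log (Fn n b) / (1 + -Real.log (Fn n b))) := by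
        rw [hFrec n hn b, hfrec n hn b]
        field_simp
      simp only [keya, keyb]
      have hqt : q b * (fn n b / Fn n b) ≤ q a * (fn n a / Fn n a) := hanti ha hb hab
      have hqt0 : 0 ≤ q a * (fn n a / Fn n a) :=
        mul_nonneg (hq a ha) (div_nonneg (hfn a ha) hu.le)
      have hr0 : 0 ≤ -Real.log (Fn n b) / (1 + -Real.log (Fn n b)) :=
        div_nonneg hTb h1b.le
      have hTba := hTanti a ha b hb hab
      have hr : -Real.log (Fn n b) / (1 + -Real.log (Fn n b))
          ≤ -Real.log (Fn n a) / (1 + -Real.log (Fn n a)) := by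
        rw [div_le_div_iff₀ h1b h1a]
        nlinarith
      exact mul_le_mul hqt hr hr0 hqt0
end

section
/- Let X be an absolutely continuous nonnegative random variable with pdf f and cdf F with F(x) > 0 for all x > 0. Define τ_n(x) = f_n(x)/F_n(x) where f_1 = f, F_1 = F, T_n(x) = −log F_n(x), F_{n+1}(x) = F_n(x)(1 + T_n(x)), f_{n+1}(x) = T_n(x)·f_n(x). If X_1 is DRHR, i.e. τ_1(x) is decreasing on (0,∞), then X_n is DRHR, i.e. τ_n(x) is decreasing on (0,∞), for every n ≥ 2. -/
open MeasureTheory Set Filter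

/-- Key algebraic fact: `u ↦ u * (1 - log u)` is monotone on `(0,1]`. -/
lemma aux_glog_mono {u v : ℝ} (hu : 0 < u) (huv : u ≤ v) (hv1 : v ≤ 1) :
    u * (1 + (-Real.log u)) ≤ v * (1 + (-Real.log v)) := by
  have hv : 0 < v := lt_of_lt_of_le hu huv
  have hlogv : Real.log v ≤ 0 := Real.log_nonpos (le_of_lt hv) hv1
  have hdiv : Real.log (v / u) ≤ v / u - 1 :=
    Real.log_le_sub_one_of_pos (div_pos hv hu)
  have hlogdiv : Real.log (v / u) = Real.log v - Real.log u :=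
    Real.log_div (ne_of_gt hv) (ne_of_gt hu)
  have hA : u * (Real.log v - Real.log u) ≤ v - u := by
    have := mul_le_mul_of_nonneg_left (hlogdiv ▸ hdiv) (le_of_lt hu)
    have huvu : u * (v / u - 1) = v - u := by field_simp
    linarith [huvu ▸ this]
  have hB : 0 ≤ (v - u) * (-Real.log v) :=
    mul_nonneg (by linarith) (by linarith)
  nlinarith [hA, hB]

/-- `t ↦ t/(1+t)` is monotone on `[0,∞)`. -/
lemma aux_tfrac_mono {s t : ℝ} (hs : 0 ≤ s) (hst : s ≤ t) :
    s / (1 + s) ≤ t / (1 + t) := by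
  have h1 : (0:ℝ) < 1 + s := by linarith
  have h2 : (0:ℝ) < 1 + t := by linarith
  rw [div_le_div_iff₀ h1 h2]
  nlinarith

/-- If `X₁` is DRHR, i.e. `τ₁(x) = f(x)/F(x)` is decreasing on `(0,∞)`,
then `X_n` is DRHR, i.e. `τ_n(x) = f_n(x)/F_n(x)` is decreasing on `(0,∞)`,
for every `n ≥ 2`. -/
theorem seq_drhr_preserved
    (F f : ℝ → ℝ) (Fn fn : ℕ → ℝ → ℝ)
    (hf : ∀ x, 0 ≤ f x)
    (hFmono : Monotone F)
    (hFpos : ∀ x, 0 < x → 0 < F x)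
    (hFle : ∀ x, F x ≤ 1)
    (hF1 : ∀ x, Fn 1 x = F x)
    (hf1 : ∀ x, fn 1 x = f x)
    (hFrec : ∀ n, 1 ≤ n → ∀ x, Fn (n + 1) x = Fn n x * (1 + (-Real.log (Fn n x))))
    (hfrec : ∀ n, 1 ≤ n → ∀ x, fn (n + 1) x = (-Real.log (Fn n x)) * fn n x)
    (hDRHR : AntitoneOn (fun x => f x / F x) (Ioi 0)) :
    ∀ n, 2 ≤ n →
      AntitoneOn (fun x => fn n x / Fn n x) (Ioi 0) := by
  have key : ∀ n, 1 ≤ n →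
      ((∀ x ∈ Ioi (0:ℝ), 0 < Fn n x ∧ Fn n x ≤ 1 ∧ 0 ≤ fn n x) ∧
        MonotoneOn (Fn n) (Ioi 0) ∧
        AntitoneOn (fun x => fn n x / Fn n x) (Ioi 0)) := by
    intro n hn
    induction n with
    | zero => omega
    | succ m ih =>
      rcases Nat.lt_or_ge m 1 with hm | hm
      · -- base case m = 0, so m+1 = 1
        have hm0 : m = 0 := by omega
        subst hm0
        refine ⟨?_, ?_, ?_⟩
        · intro x hx
          rw [hF1, hf1]
          exact ⟨hFpos x hx, hFle x, hf x⟩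
        · intro x _ y _ hxy
          rw [hF1, hF1]; exact hFmono hxy
        · simp only [hF1, hf1]; exact hDRHR
      · obtain ⟨hb, hmono, hτ⟩ := ih hm
        have hbpos : ∀ x ∈ Ioi (0:ℝ), 0 < Fn m x := fun x hx => (hb x hx).1
        have hble : ∀ x ∈ Ioi (0:ℝ), Fn m x ≤ 1 := fun x hx => (hb x hx).2.1
        have hfnn : ∀ x ∈ Ioi (0:ℝ), 0 ≤ fn m x := fun x hx => (hb x hx).2.2
        have hT : ∀ x ∈ Ioi (0:ℝ), 0 ≤ -Real.log (Fn m x) := by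
          intro x hx
          have := Real.log_nonpos (le_of_lt (hbpos x hx)) (hble x hx)
          linarith
        have hTanti : ∀ x ∈ Ioi (0:ℝ), ∀ y ∈ Ioi (0:ℝ), x ≤ y →
            -Real.log (Fn m y) ≤ -Real.log (Fn m x) := by
          intro x hx y hy hxy
          have := Real.log_le_log (hbpos x hx) (hmono hx hy hxy)
          linarith
        have hFpos' : ∀ x ∈ Ioi (0:ℝ), 0 < Fn (m+1) x := by
          intro x hx
          rw [hFrec m hm x]
          have := hT x hx
          nlinarith [hbpos x hx]
        refine ⟨?_, ?_, ?_⟩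
        · intro x hx
          refine ⟨hFpos' x hx, ?_, ?_⟩
          · rw [hFrec m hm x]
            calc Fn m x * (1 + (-Real.log (Fn m x)))
                ≤ 1 * (1 + (-Real.log (1:ℝ))) :=
                  aux_glog_mono (hbpos x hx) (hble x hx) le_rfl
              _ = 1 := by simp
          · rw [hfrec m hm x]
            exact mul_nonneg (hT x hx) (hfnn x hx)
        · intro x hx y hy hxy
          rw [hFrec m hm x, hFrec m hm y]
          exact aux_glog_mono (hbpos x hx) (hmono hx hy hxy) (hble y hy)
        · intro x hx y hy hxy
          have hEq : ∀ z ∈ Ioi (0:ℝ), fn (m+1) z / Fn (m+1) z =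
              (fn m z / Fn m z) * ((-Real.log (Fn m z)) / (1 + (-Real.log (Fn m z)))) := by
            intro z hz
            rw [hFrec m hm z, hfrec m hm z]
            have h1 : Fn m z ≠ 0 := ne_of_gt (hbpos z hz)
            have h2 : (1 + (-Real.log (Fn m z))) ≠ 0 := by
              have := hT z hz; positivity
            field_simp
          simp only [hEq x hx, hEq y hy]
          have hay : 0 ≤ fn m y / Fn m y := div_nonneg (hfnn y hy) (le_of_lt (hbpos y hy))
          have hby : 0 ≤ (-Real.log (Fn m y)) / (1 + (-Real.log (Fn m y))) := by
            have := hT y hy; positivity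
          have hbx : 0 ≤ (-Real.log (Fn m x)) / (1 + (-Real.log (Fn m x))) := by
            have := hT x hx; positivity
          exact mul_le_mul (hτ hx hy hxy)
            (aux_tfrac_mono (hT y hy) (hTanti x hx y hy hxy)) hby
            (div_nonneg (hfnn x hx) (le_of_lt (hbpos x hx)))
  intro n hn
  exact (key n (by omega)).2.2
end

section
/- Let X be an absolutely continuous nonnegative random variable with pdf f and cdf F with F(x) > 0 for all x > 0. Define τ_n(x) = f_n(x)/F_n(x) where f_1 = f, F_1 = F, T_n(x) = −log F_n(x), F_{n+1}(x) = F_n(x)(1 + T_n(x)), f_{n+1}(x) = T_n(x)·f_n(x). If X_1 is LB-DRHR, i.e. x·τ_1(x) is decreasing on (0,∞), then X_n is LB-DRHR, i.e. x·τ_n(x) is decreasing on (0,∞), for every n ≥ 2. -/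
open MeasureTheory Set Filter

/-- If `X₁` is LB-DRHR, i.e. `x ↦ x·τ₁(x)` is decreasing on `(0,∞)`,
then `X_n` is LB-DRHR, i.e. `x ↦ x·τ_n(x)` is decreasing on `(0,∞)`, for every `n ≥ 2`. -/
theorem seq_lb_drhr_preserved
    (F f : ℝ → ℝ) (Fn fn : ℕ → ℝ → ℝ)
    (hf : ∀ x, 0 ≤ f x)
    (hFmono : Monotone F)
    (hFpos : ∀ x, 0 < x → 0 < F x)
    (hFle : ∀ x, F x ≤ 1)
    (hF1 : ∀ x, Fn 1 x = F x)
    (hf1 : ∀ x, fn 1 x = f x)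
    (hFrec : ∀ n, 1 ≤ n → ∀ x, Fn (n + 1) x = Fn n x * (1 + (-Real.log (Fn n x))))
    (hfrec : ∀ n, 1 ≤ n → ∀ x, fn (n + 1) x = (-Real.log (Fn n x)) * fn n x)
    (hLBDRHR : AntitoneOn (fun x => x * (f x / F x)) (Ioi 0)) :
    ∀ n, 2 ≤ n →
      AntitoneOn (fun x => x * (fn n x / Fn n x)) (Ioi 0) := by
  have key : ∀ n, 1 ≤ n →
      (∀ x, 0 < x → 0 < Fn n x) ∧ (∀ x, 0 < x → Fn n x ≤ 1) ∧
      MonotoneOn (Fn n) (Ioi 0) ∧ (∀ x, 0 < x → 0 ≤ fn n x) ∧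
      AntitoneOn (fun x => x * (fn n x / Fn n x)) (Ioi 0) := by
    intro n hn
    induction n, hn using Nat.le_induction with
    | base =>
        refine ⟨fun x hx => by rw [hF1]; exact hFpos x hx,
          fun x hx => by rw [hF1]; exact hFle x,
          fun x _ y _ hxy => by rw [hF1, hF1]; exact hFmono hxy,
          fun x hx => by rw [hf1]; exact hf x, ?_⟩
        simp only [hF1, hf1]
        exact hLBDRHR
    | succ n hn ih =>
        obtain ⟨hpos, hle, hmono, hfpos, hanti⟩ := ih
        have hT : ∀ x, 0 < x → 0 ≤ -Real.log (Fn n x) := by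
          intro x hx
          simpa using Real.log_nonpos (hpos x hx).le (hle x hx)
        have hpos' : ∀ x, 0 < x → 0 < Fn (n+1) x := by
          intro x hx
          rw [hFrec n hn x]
          have := hT x hx
          nlinarith [hpos x hx]
        have hle' : ∀ x, 0 < x → Fn (n+1) x ≤ 1 := by
          intro x hx
          rw [hFrec n hn x]
          have hu := hpos x hx
          have h1 := Real.log_le_sub_one_of_pos (inv_pos.mpr hu)
          rw [Real.log_inv] at h1
          have h2 : Fn n x * (Fn n x)⁻¹ = 1 := mul_inv_cancel₀ hu.ne'
          nlinarith [mul_le_mul_of_nonneg_left h1 hu.le]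
        have hmono' : MonotoneOn (Fn (n+1)) (Ioi 0) := by
          intro x hx y hy hxy
          rw [hFrec n hn x, hFrec n hn y]
          have hu := hpos x (mem_Ioi.mp hx)
          have hv := hpos y (mem_Ioi.mp hy)
          have huv := hmono hx hy hxy
          have hvle := hle y (mem_Ioi.mp hy)
          have hlogv : Real.log (Fn n y) ≤ 0 := Real.log_nonpos hv.le hvle
          have h1 := Real.log_le_sub_one_of_pos (div_pos hv hu)
          rw [Real.log_div hv.ne' hu.ne'] at h1
          have h2 : Fn n x * (Real.log (Fn n y) - Real.log (Fn n x)) ≤ Fn n y - Fn n x := by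
            have h3 := mul_le_mul_of_nonneg_left h1 hu.le
            have h4 : Fn n x * (Fn n y / Fn n x - 1) = Fn n y - Fn n x := by
              field_simp
            linarith [h3, h4.le, h4.ge]
          nlinarith [mul_nonneg (sub_nonneg.mpr huv) (neg_nonneg.mpr hlogv)]
        have hfpos' : ∀ x, 0 < x → 0 ≤ fn (n+1) x := by
          intro x hx
          rw [hfrec n hn x]
          exact mul_nonneg (hT x hx) (hfpos x hx)
        refine ⟨hpos', hle', hmono', hfpos', ?_⟩
        have hEq : ∀ z, 0 < z → z * (fn (n+1) z / Fn (n+1) z) =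
            (z * (fn n z / Fn n z)) *
              ((-Real.log (Fn n z)) / (1 + -Real.log (Fn n z))) := by
          intro z hz
          rw [hfrec n hn z, hFrec n hn z]
          have h1 : Fn n z ≠ 0 := (hpos z hz).ne'
          have h2 : (1 : ℝ) + -Real.log (Fn n z) ≠ 0 := by
            have := hT z hz; positivity
          field_simp
        intro x hx y hy hxy
        simp only
        rw [hEq x (mem_Ioi.mp hx), hEq y (mem_Ioi.mp hy)]
        have hTx := hT x (mem_Ioi.mp hx)
        have hTy := hT y (mem_Ioi.mp hy)
        have hTle : -Real.log (Fn n y) ≤ -Real.log (Fn n x) := by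
          have := Real.log_le_log (hpos x (mem_Ioi.mp hx)) (hmono hx hy hxy)
          linarith
        have hBle : (-Real.log (Fn n y)) / (1 + -Real.log (Fn n y)) ≤
            (-Real.log (Fn n x)) / (1 + -Real.log (Fn n x)) := by
          rw [div_le_div_iff₀ (by linarith) (by linarith)]
          nlinarith
        exact mul_le_mul (hanti hx hy hxy) hBle
          (div_nonneg hTy (by linarith))
          (mul_nonneg (le_of_lt (mem_Ioi.mp hx))
            (div_nonneg (hfpos x (mem_Ioi.mp hx)) (hpos x (mem_Ioi.mp hx)).le))
  intro n hn
  exact (key n (by omega)).2.2.2.2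
end

section
/- Let X be an absolutely continuous nonnegative random variable with pdf f and cdf F with F(x) > 0 for all x > 0. Define τ_n(x) = f_n(x)/F_n(x) where f_1 = f, F_1 = F, T_n(x) = −log F_n(x), F_{n+1}(x) = F_n(x)(1 + T_n(x)), f_{n+1}(x) = T_n(x)·f_n(x). Then for every n ≥ 1, the ratio τ_{n+1}(x)/τ_n(x) equals T_n(x)/(1 + T_n(x)) and is decreasing in x > 0; consequently X_n ≥_RRH X_{n+1}, i.e. X_{n+1} is smaller than X_n in the relative reversed hazard rate order. -/
/-!
`F_{n+1} = φ(F_n)` with `φ t = t (1 - log t)`. Since `φ' = -log`, `φ` is strictly increasing on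
`[0, 1]` with `φ 1 = 1`, so by induction every `F_n` is increasing on `(0, ∞)` with values in
`(0, 1)`. Hence `T_n = -log F_n` is positive and decreasing, all `f_n` are positive, and
`τ_{n+1} / τ_n = T_n / (1 + T_n)` is decreasing because `t ↦ t / (1 + t)` is increasing.
-/

open Set Real

theorem strictMonoOn_mul_one_add_neg_log :
    StrictMonoOn (fun t : ℝ => t * (1 + -log t)) (Icc 0 1) := by
  have hfun : (fun t : ℝ => t * (1 + -log t)) = fun t => t - t * log t := by
    ext t; ring
  rw [hfun]
  refine strictMonoOn_of_deriv_pos (convex_Icc 0 1)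
    (continuous_id.sub continuous_mul_log).continuousOn fun t ht => ?_
  rw [interior_Icc] at ht
  have hderiv : HasDerivAt (fun t => t - t * log t) (1 - (log t + 1)) t :=
    (hasDerivAt_id t).sub (hasDerivAt_mul_log ht.1.ne')
  rw [hderiv.deriv]
  linarith [log_neg ht.1 ht.2]

theorem mul_one_add_neg_log_mem_Ioo {t : ℝ} (ht : t ∈ Ioo 0 1) :
    t * (1 + -log t) ∈ Ioo 0 1 := by
  refine ⟨mul_pos ht.1 (by linarith [log_neg ht.1 ht.2]), ?_⟩
  simpa using strictMonoOn_mul_one_add_neg_log (Ioo_subset_Icc_self ht)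
    (right_mem_Icc.2 zero_le_one) ht.2

theorem antitoneOn_neg_log_div_one_add_neg_log :
    AntitoneOn (fun s : ℝ => -log s / (1 + -log s)) (Ioc 0 1) := by
  intro a ha b hb hab
  have hTb : 0 ≤ -log b := neg_nonneg.2 (log_nonpos hb.1.le hb.2)
  have hT : -log b ≤ -log a := neg_le_neg (log_le_log ha.1 hab)
  rw [div_le_div_iff₀ (by linarith) (by linarith)]
  linarith

theorem cdfSeq_mem_Ioo {u : ℕ → ℝ} (h1 : u 1 ∈ Ioo 0 1)
    (hrec : ∀ n, 1 ≤ n → u (n + 1) = u n * (1 + -log (u n))) :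
    ∀ n, 1 ≤ n → u n ∈ Ioo 0 1 := by
  intro n hn
  induction n, hn using Nat.le_induction with
  | base => exact h1
  | succ n hn ih => rw [hrec n hn]; exact mul_one_add_neg_log_mem_Ioo ih

theorem pdfSeq_pos {u v : ℕ → ℝ} (hu : ∀ n, 1 ≤ n → u n ∈ Ioo 0 1) (h1 : 0 < v 1)
    (hrec : ∀ n, 1 ≤ n → v (n + 1) = -log (u n) * v n) :
    ∀ n, 1 ≤ n → 0 < v n := by
  intro n hn
  induction n, hn using Nat.le_induction with
  | base => exact h1
  | succ n hn ih =>
    rw [hrec n hn]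
    exact mul_pos (neg_pos.2 (log_neg (hu n hn).1 (hu n hn).2)) ih

theorem cdfSeq_monotoneOn {G : ℕ → ℝ → ℝ} {s : Set ℝ}
    (hG : ∀ n, 1 ≤ n → MapsTo (G n) s (Ioo 0 1)) (h1 : MonotoneOn (G 1) s)
    (hrec : ∀ n, 1 ≤ n → ∀ x, G (n + 1) x = G n x * (1 + -log (G n x))) :
    ∀ n, 1 ≤ n → MonotoneOn (G n) s := by
  intro n hn
  induction n, hn using Nat.le_induction with
  | base => exact h1
  | succ n hn ih =>
    rw [funext (hrec n hn)]
    exact strictMonoOn_mul_one_add_neg_log.monotoneOn.comp ih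
      ((hG n hn).mono_right Ioo_subset_Icc_self)

theorem seq_relative_reversed_hazard_general
    (F f : ℝ → ℝ) (Fn fn : ℕ → ℝ → ℝ)
    (hfpos : ∀ x, 0 < x → 0 < f x)
    (hFmono : Monotone F)
    (hFpos : ∀ x, 0 < x → 0 < F x)
    (hFlt1 : ∀ x, 0 < x → F x < 1)
    (hF1 : ∀ x, Fn 1 x = F x)
    (hf1 : ∀ x, fn 1 x = f x)
    (hFrec : ∀ n, 1 ≤ n → ∀ x, Fn (n + 1) x = Fn n x * (1 + (-Real.log (Fn n x))))
    (hfrec : ∀ n, 1 ≤ n → ∀ x, fn (n + 1) x = (-Real.log (Fn n x)) * fn n x) :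
    ∀ n, 1 ≤ n →
      (∀ x, 0 < x →
          (fn (n + 1) x / Fn (n + 1) x) / (fn n x / Fn n x)
            = (-Real.log (Fn n x)) / (1 + (-Real.log (Fn n x))))
      ∧ AntitoneOn
          (fun x => (fn (n + 1) x / Fn (n + 1) x) / (fn n x / Fn n x)) (Ioi 0) := by
  have hFn_mem : ∀ n, 1 ≤ n → MapsTo (Fn n) (Ioi 0) (Ioo 0 1) := fun n hn x hx =>
    cdfSeq_mem_Ioo (u := fun k => Fn k x) (by simpa [hF1] using ⟨hFpos x hx, hFlt1 x hx⟩)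
      (fun k hk => hFrec k hk x) n hn
  have hfn_pos : ∀ n, 1 ≤ n → ∀ x, 0 < x → 0 < fn n x := fun n hn x hx =>
    pdfSeq_pos (u := fun k => Fn k x) (v := fun k => fn k x) (fun k hk => hFn_mem k hk hx)
      (by simpa [hf1] using hfpos x hx) (fun k hk => hfrec k hk x) n hn
  have hFn_mono : ∀ n, 1 ≤ n → MonotoneOn (Fn n) (Ioi 0) :=
    cdfSeq_monotoneOn hFn_mem (fun a _ b _ hab => by simpa [hF1] using hFmono hab) hFrec
  intro n hn
  have hratio : ∀ x, 0 < x → (fn (n + 1) x / Fn (n + 1) x) / (fn n x / Fn n x)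
      = (-log (Fn n x)) / (1 + (-log (Fn n x))) := fun x hx => by
    have hF : Fn n x ≠ 0 := (hFn_mem n hn hx).1.ne'
    have hf : fn n x ≠ 0 := (hfn_pos n hn x hx).ne'
    rw [hFrec n hn, hfrec n hn]
    field_simp
  refine ⟨hratio, ?_⟩
  exact (antitoneOn_neg_log_div_one_add_neg_log.comp_MonotoneOn (hFn_mono n hn)
    ((hFn_mem n hn).mono_right Ioo_subset_Ioc_self)).congr fun x hx => (hratio x hx).symm

/-- For every `n ≥ 1`, the ratio `τ_{n+1}(x)/τ_n(x)` equals
`T_n(x)/(1 + T_n(x))` and is decreasing in `x > 0`; consequently `X_n ≥_RRH X_{n+1}`. -/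
theorem seq_relative_reversed_hazard
    (F f : ℝ → ℝ) (Fn fn : ℕ → ℝ → ℝ)
    (hfpos : ∀ x, 0 < x → 0 < f x)
    (hFmono : Monotone F)
    (hFpos : ∀ x, 0 < x → 0 < F x)
    (hFlt1 : ∀ x, 0 < x → F x < 1)
    (hFle : ∀ x, F x ≤ 1)
    (hF1 : ∀ x, Fn 1 x = F x)
    (hf1 : ∀ x, fn 1 x = f x)
    (hFrec : ∀ n, 1 ≤ n → ∀ x, Fn (n + 1) x = Fn n x * (1 + (-Real.log (Fn n x))))
    (hfrec : ∀ n, 1 ≤ n → ∀ x, fn (n + 1) x = (-Real.log (Fn n x)) * fn n x) :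
    ∀ n, 1 ≤ n →
      (∀ x, 0 < x →
          (fn (n + 1) x / Fn (n + 1) x) / (fn n x / Fn n x)
            = (-Real.log (Fn n x)) / (1 + (-Real.log (Fn n x))))
      ∧ AntitoneOn
          (fun x => (fn (n + 1) x / Fn (n + 1) x) / (fn n x / Fn n x)) (Ioi 0) :=
  seq_relative_reversed_hazard_general F f Fn fn hfpos hFmono hFpos hFlt1 hF1 hf1 hFrec hfrec
end

section
/- Let X be an absolutely continuous nonnegative random variable with pdf f and cdf F with F(x) > 0 for all x > 0, and let {X_n, n ≥ 1} have reversed hazard rates τ_n(x) = f_n(x)/F_n(x), where f_1 = f, F_1 = F, T_n(x) = −log F_n(x), F_{n+1}(x) = F_n(x)(1 + T_n(x)), f_{n+1}(x) = T_n(x)·f_n(x). Let Y be an absolutely continuous nonnegative random variable with reversed hazard rate τ_Y, and suppose X_1 and Y satisfy the proportional reversed hazards rate model with cdf G(x) = [F_1(x)]^θ for some θ > 0. Then for every n = 1, 2, …, the ratio τ_n(x)/τ_Y(x) is decreasing in x > 0, i.e. X_n ≤_RRH Y. -/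
open MeasureTheory Set Filter

private lemma g_hasDeriv (t : ℝ) (ht : 0 < t) :
    HasDerivAt (fun u : ℝ => u * (1 - Real.log u)) (-Real.log t) t := by
  have h : HasDerivAt (fun u : ℝ => u * (1 - Real.log u))
      (1 * (1 - Real.log t) + t * (0 - t⁻¹)) t := by
    exact (hasDerivAt_id t).mul ((hasDerivAt_const t 1).sub (Real.hasDerivAt_log ht.ne'))
  convert h using 1
  field_simp
  ring

private lemma g_mono {u v : ℝ} (hu : 0 < u) (huv : u ≤ v) (hv : v ≤ 1) :
    u * (1 - Real.log u) ≤ v * (1 - Real.log v) := by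
  have hmono : MonotoneOn (fun t : ℝ => t * (1 - Real.log t)) (Icc u v) := by
    apply monotoneOn_of_deriv_nonneg (convex_Icc u v)
    · intro t ht
      exact ((g_hasDeriv t (lt_of_lt_of_le hu ht.1)).continuousAt).continuousWithinAt
    · intro t ht
      rw [interior_Icc] at ht
      exact (g_hasDeriv t (lt_trans hu ht.1)).differentiableAt.differentiableWithinAt
    · intro t ht
      rw [interior_Icc] at ht
      rw [(g_hasDeriv t (lt_trans hu ht.1)).deriv]
      simp only [neg_nonneg]
      exact Real.log_nonpos (le_of_lt (lt_trans hu ht.1)) (le_trans (le_of_lt ht.2) hv)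
  exact hmono (left_mem_Icc.mpr huv) (right_mem_Icc.mpr huv) huv

private lemma g_lt_one {u : ℝ} (hu : 0 < u) (hu1 : u < 1) :
    u * (1 + -Real.log u) < 1 := by
  set t := -Real.log u with ht
  have htpos : 0 < t := by
    simp only [ht, neg_pos]
    exact Real.log_neg hu hu1
  have hue : u = Real.exp (-t) := by
    rw [ht, neg_neg, Real.exp_log hu]
  have h1 : 1 + t < Real.exp t := by
    have := Real.add_one_lt_exp htpos.ne'
    linarith
  rw [hue]
  calc Real.exp (-t) * (1 + t) < Real.exp (-t) * Real.exp t :=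
        mul_lt_mul_of_pos_left h1 (Real.exp_pos _)
    _ = 1 := by rw [← Real.exp_add]; simp

/-- If `X₁` and `Y` satisfy the proportional reversed hazards rate model
with constant `θ > 0` (i.e. `τ_Y = θ τ₁`, equivalently `G = F₁^θ`), then for every
`n ≥ 1` the ratio `τ_n(x)/τ_Y(x)` is decreasing in `x > 0`, i.e. `X_n ≤_RRH Y`. -/
theorem seq_rrh_vs_prhr
    (F f τY : ℝ → ℝ) (Fn fn : ℕ → ℝ → ℝ) (θ : ℝ)
    (hθ : 0 < θ)
    (hfpos : ∀ x, 0 < x → 0 < f x)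
    (hFmono : Monotone F)
    (hFpos : ∀ x, 0 < x → 0 < F x)
    (hFlt1 : ∀ x, 0 < x → F x < 1)
    (hFle : ∀ x, F x ≤ 1)
    (hF1 : ∀ x, Fn 1 x = F x)
    (hf1 : ∀ x, fn 1 x = f x)
    (hFrec : ∀ n, 1 ≤ n → ∀ x, Fn (n + 1) x = Fn n x * (1 + (-Real.log (Fn n x))))
    (hfrec : ∀ n, 1 ≤ n → ∀ x, fn (n + 1) x = (-Real.log (Fn n x)) * fn n x)
    (hprhr : ∀ x, 0 < x → τY x = θ * (f x / F x)) :
    ∀ n, 1 ≤ n →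
      AntitoneOn (fun x => (fn n x / Fn n x) / τY x) (Ioi 0) := by
  -- basic facts about the sequence
  have key : ∀ n, 1 ≤ n →
      (∀ x, 0 < x → 0 < Fn n x ∧ Fn n x < 1 ∧ 0 < fn n x) ∧
      (∀ x, 0 < x → ∀ y, 0 < y → x ≤ y → Fn n x ≤ Fn n y) := by
    intro n hn
    induction n, hn using Nat.le_induction with
    | base =>
      refine ⟨fun x hx => ?_, fun x hx y hy hxy => ?_⟩
      · rw [hF1, hf1]; exact ⟨hFpos x hx, hFlt1 x hx, hfpos x hx⟩
      · rw [hF1, hF1]; exact hFmono hxy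
    | succ n hn ih =>
      obtain ⟨ihp, ihm⟩ := ih
      refine ⟨fun x hx => ?_, fun x hx y hy hxy => ?_⟩
      · obtain ⟨h0, h1, hf⟩ := ihp x hx
        have hT : 0 < -Real.log (Fn n x) := by
          simp only [neg_pos]; exact Real.log_neg h0 h1
        refine ⟨?_, ?_, ?_⟩
        · rw [hFrec n hn x]; positivity
        · rw [hFrec n hn x]; exact g_lt_one h0 h1
        · rw [hfrec n hn x]; positivity
      · rw [hFrec n hn x, hFrec n hn y]
        obtain ⟨hx0, hx1, _⟩ := ihp x hx
        obtain ⟨hy0, hy1, _⟩ := ihp y hy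
        have := g_mono hx0 (ihm x hx y hy hxy) (le_of_lt hy1)
        simpa [sub_eq_add_neg] using this
  -- τY positivity
  have hτY : ∀ x, 0 < x → 0 < τY x := by
    intro x hx
    rw [hprhr x hx]
    have := hfpos x hx; have := hFpos x hx
    positivity
  intro n hn
  induction n, hn using Nat.le_induction with
  | base =>
    intro x hx y hy hxy
    simp only [mem_Ioi] at hx hy
    have hfx := hfpos x hx; have hFx := hFpos x hx
    have hfy := hfpos y hy; have hFy := hFpos y hy
    show fn 1 y / Fn 1 y / τY y ≤ fn 1 x / Fn 1 x / τY x
    rw [hF1, hf1, hF1, hf1, hprhr x hx, hprhr y hy]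
    have e : ∀ a : ℝ, 0 < a → a / (θ * a) = 1 / θ := by
      intro a ha
      field_simp
    rw [e _ (by positivity), e _ (by positivity)]
  | succ n hn ih =>
    intro x hx y hy hxy
    simp only [mem_Ioi] at hx hy
    obtain ⟨hFnx0, hFnx1, hfnx⟩ := (key n hn).1 x hx
    obtain ⟨hFny0, hFny1, hfny⟩ := (key n hn).1 y hy
    have hTx : 0 < -Real.log (Fn n x) := by
      simp only [neg_pos]; exact Real.log_neg hFnx0 hFnx1
    have hTy : 0 < -Real.log (Fn n y) := by
      simp only [neg_pos]; exact Real.log_neg hFny0 hFny1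
    have hrw : ∀ z, 0 < z → 0 < Fn n z → 0 < fn n z →
        fn (n + 1) z / Fn (n + 1) z / τY z =
          ((-Real.log (Fn n z)) / (1 + -Real.log (Fn n z))) * (fn n z / Fn n z / τY z) := by
      intro z hz hF0 hf0
      have hT1 : (0:ℝ) < 1 + -Real.log (Fn n z) := by
        rcases lt_or_ge (Real.log (Fn n z)) 0 with h | h
        · linarith
        · have : Real.log (Fn n z) = 0 := le_antisymm
            (Real.log_nonpos (le_of_lt hF0) (le_of_lt ((key n hn).1 z hz).2.1)) h
          rw [this]; norm_num
      have hτ := hτY z hz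
      have h1 := hF0.ne'
      have h2 := hT1.ne'
      have h3 := hτ.ne'
      rw [hfrec n hn z, hFrec n hn z]
      field_simp
    show fn (n + 1) y / Fn (n + 1) y / τY y ≤ fn (n + 1) x / Fn (n + 1) x / τY x
    rw [hrw x hx hFnx0 hfnx, hrw y hy hFny0 hfny]
    have hT1x : (0:ℝ) < 1 + -Real.log (Fn n x) := by linarith
    have hT1y : (0:ℝ) < 1 + -Real.log (Fn n y) := by linarith
    -- T is antitone
    have hTmono : -Real.log (Fn n y) ≤ -Real.log (Fn n x) := by
      have := Real.log_le_log hFnx0 ((key n hn).2 x hx y hy hxy)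
      linarith
    have hφ : (-Real.log (Fn n y)) / (1 + -Real.log (Fn n y)) ≤
        (-Real.log (Fn n x)) / (1 + -Real.log (Fn n x)) := by
      rw [div_le_div_iff₀ hT1y hT1x]
      nlinarith
    have hr : fn n y / Fn n y / τY y ≤ fn n x / Fn n x / τY x := ih hx hy hxy
    have hrpos : 0 ≤ fn n y / Fn n y / τY y := by
      have := hτY y hy; positivity
    have hφx : 0 ≤ (-Real.log (Fn n x)) / (1 + -Real.log (Fn n x)) := by positivity
    exact mul_le_mul hφ hr hrpos hφx
end

section
/- Let X be an absolutely continuous nonnegative random variable with pdf f and cdf F with F(x) > 0 for all x > 0, and define the sequence F_1 = F, f_1 = f, T_n(x) = −log F_n(x), F_{n+1}(x) = F_n(x)(1 + T_n(x)), f_{n+1}(x) = T_n(x)·f_n(x), with reversed hazard rate τ_n(x) = f_n(x)/F_n(x). Then for every t > 0 and every n = 1, 2, …, the conditional expectation E[T_n(X_n)/τ_n(X_n) | X_n ≤ t] = (1/F_n(t))·∫_0^t (T_n(x)/τ_n(x))·f_n(x) dx equals CE(X_n; t) + μ̃_n(t)·T_n(t), where CE(X_n; t) = −∫_0^t (F_n(x)/F_n(t))·log(F_n(x)/F_n(t))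 dx is the dynamic cumulative entropy and μ̃_n(t) = (1/F_n(t))·∫_0^t F_n(x) dx is the mean inactivity time of X_n. -/
open MeasureTheory Set Filter

/-- For every `t > 0` and `n ≥ 1`,
`E[T_n(X_n)/τ_n(X_n) | X_n ≤ t] = CE(X_n; t) + μ̃_n(t) T_n(t)`, where
`CE(X_n; t) = -∫_0^t (F_n(x)/F_n(t)) log (F_n(x)/F_n(t)) dx` is the dynamic cumulative
entropy and `μ̃_n(t) = (1/F_n(t)) ∫_0^t F_n(x) dx` is the mean inactivity time. -/
theorem seq_conditional_expectation_ce
    (F f : ℝ → ℝ) (Fn fn : ℕ → ℝ → ℝ)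
    (hFcont : Continuous F)
    (hderiv : ∀ x, 0 < x → HasDerivAt F (f x) x)
    (hfpos : ∀ x, 0 < x → 0 < f x)
    (hFmono : Monotone F)
    (hFpos : ∀ x, 0 < x → 0 < F x)
    (hFlt1 : ∀ x, 0 < x → F x < 1)
    (hFle : ∀ x, F x ≤ 1)
    (hF1 : ∀ x, Fn 1 x = F x)
    (hf1 : ∀ x, fn 1 x = f x)
    (hFrec : ∀ n, 1 ≤ n → ∀ x, Fn (n + 1) x = Fn n x * (1 + (-Real.log (Fn n x))))
    (hfrec : ∀ n, 1 ≤ n → ∀ x, fn (n + 1) x = (-Real.log (Fn n x)) * fn n x) :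
    ∀ t, 0 < t → ∀ n, 1 ≤ n →
      (1 / Fn n t) *
          (∫ x in (0:ℝ)..t, ((-Real.log (Fn n x)) / (fn n x / Fn n x)) * fn n x)
        = (-(∫ x in (0:ℝ)..t, (Fn n x / Fn n t) * Real.log (Fn n x / Fn n t)))
            + ((1 / Fn n t) * ∫ x in (0:ℝ)..t, Fn n x) * (-Real.log (Fn n t)) := by
  have key : ∀ n, 1 ≤ n → Continuous (Fn n) ∧
      ∀ x, 0 < x → 0 < Fn n x ∧ Fn n x < 1 ∧ 0 < fn n x := by
    intro n hn
    induction n, hn using Nat.le_induction with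
    | base =>
      have e : Fn 1 = F := funext hF1
      refine ⟨e ▸ hFcont, fun x hx => ?_⟩
      rw [hF1, hf1]
      exact ⟨hFpos x hx, hFlt1 x hx, hfpos x hx⟩
    | succ n hn ih =>
      obtain ⟨hc, hp⟩ := ih
      have e : Fn (n + 1) = fun x => Fn n x - Fn n x * Real.log (Fn n x) :=
        funext fun x => by rw [hFrec n hn x]; ring
      refine ⟨e ▸ (hc.sub (Real.continuous_mul_log.comp hc)), fun x hx => ?_⟩
      obtain ⟨hpos, hlt1, hfp⟩ := hp x hx
      have hlog : Real.log (Fn n x) < 0 := Real.log_neg hpos hlt1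
      have h1 : (0:ℝ) < 1 + -Real.log (Fn n x) := by linarith
      refine ⟨?_, ?_, ?_⟩
      · rw [hFrec n hn x]; exact mul_pos hpos h1
      · rw [hFrec n hn x]
        have hne : -Real.log (Fn n x) ≠ 0 := ne_of_gt (by linarith)
        have h2 := Real.add_one_lt_exp hne
        rw [Real.exp_neg, Real.exp_log hpos] at h2
        calc Fn n x * (1 + -Real.log (Fn n x))
            < Fn n x * (Fn n x)⁻¹ := by
              apply mul_lt_mul_of_pos_left _ hpos; linarith
          _ = 1 := mul_inv_cancel₀ (ne_of_gt hpos)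
      · rw [hfrec n hn x]
        exact mul_pos (by linarith) hfp
  intro t ht n hn
  obtain ⟨hc, hp⟩ := key n hn
  have hFt : 0 < Fn n t := (hp t ht).1
  have h1 : (∫ x in (0:ℝ)..t, ((-Real.log (Fn n x)) / (fn n x / Fn n x)) * fn n x)
      = ∫ x in (0:ℝ)..t, -(Fn n x * Real.log (Fn n x)) := by
    apply intervalIntegral.integral_congr_ae
    filter_upwards with x hx
    rw [Set.uIoc_of_le ht.le] at hx
    obtain ⟨hpos, hlt1, hfp⟩ := hp x hx.1
    rw [div_div_eq_mul_div, div_mul_cancel₀ _ (ne_of_gt hfp)]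
    ring
  have h2 : (∫ x in (0:ℝ)..t, (Fn n x / Fn n t) * Real.log (Fn n x / Fn n t))
      = ∫ x in (0:ℝ)..t,
        ((Fn n x * Real.log (Fn n x)) / Fn n t - (Real.log (Fn n t) / Fn n t) * Fn n x) := by
    apply intervalIntegral.integral_congr_ae
    filter_upwards with x hx
    rw [Set.uIoc_of_le ht.le] at hx
    obtain ⟨hpos, hlt1, hfp⟩ := hp x hx.1
    rw [Real.log_div (ne_of_gt hpos) (ne_of_gt hFt)]
    field_simp
  have hi1 : IntervalIntegrable (fun x => Fn n x * Real.log (Fn n x)) volume 0 t :=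
    (Real.continuous_mul_log.comp hc).intervalIntegrable _ _
  have hi2 : IntervalIntegrable (Fn n) volume 0 t := hc.intervalIntegrable _ _
  rw [h1, h2, intervalIntegral.integral_sub (hi1.div_const _) (hi2.const_mul _),
    intervalIntegral.integral_div, intervalIntegral.integral_const_mul,
    intervalIntegral.integral_neg]
  ring
end

section
/- Let X be an absolutely continuous nonnegative random variable with finite mean, pdf f and cdf F with F(x) > 0 for all x > 0, and define the sequence F_1 = F, f_1 = f, T_n(x) = −log F_n(x), F_{n+1}(x) = F_n(x)(1 + T_n(x)), f_{n+1}(x) = T_n(x)·f_n(x). Then for every t > 0 and every n = 1, 2, …, the conditional covariance Cov[X_n, T_n(X_n) | X_n ≤ t] := E[(X_n − E(X_n))·(T_n(X_n) − E(T_n(X_n))) | X_n ≤ t], where E(T_n(X_n)) = 1, satisfies Cov[X_n, T_n(X_n) | X_n ≤ t] = T_n(t)·[μ_n(t) − E(X_n)] − CE(X_n; t), where μ_n(t) = E[X_n | X_n ≤ t] = (1/F_n(t))·∫_0^t x f_n(x) dx is the mean past lifetime and CE(X_n; t) = −∫_0^t (F_n(x)/F_n(t))·log(F_n(x)/F_n(t))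 dx is the dynamic cumulative entropy. -/
/-!
`F_{n+1} = F_n + negMulLog ∘ F_n` is again a cdf of the same kind, with density `T_n f_n`.
Hence the fundamental theorem of calculus gives `∫_0^t T_n f_n = F_{n+1}(t)`, and integration by
parts gives `∫_0^t x T_n(x) f_n(x) dx = t F_{n+1}(t) - ∫_0^t F_n - ∫_0^t negMulLog ∘ F_n`, where
`∫_0^t negMulLog ∘ F_n = F_n(t) CE(X_n; t) + T_n(t) ∫_0^t F_n`. After division by `F_n(t)` these
are `E[T_n(X_n) | X_n ≤ t] = 1 + T_n(t)` and
`E[X_n T_n(X_n) | X_n ≤ t] = μ_n(t)(1 + T_n(t)) - CE(X_n; t)`, and the covariance identity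
follows by expanding `(X_n - m)(T_n(X_n) - 1)`.
-/

open MeasureTheory Set Filter
open Real

structure IsLifetimeCdf (G g : ℝ → ℝ) : Prop where
  continuous : Continuous G
  map_zero : G 0 = 0
  pos : ∀ x, 0 < x → 0 < G x
  le_one : ∀ x, 0 < x → G x ≤ 1
  hasDerivAt : ∀ x, 0 < x → HasDerivAt G (g x) x
  density_nonneg : ∀ x, 0 < x → 0 ≤ g x

noncomputable def meanPastLifetime (G g : ℝ → ℝ) (t : ℝ) : ℝ :=
  1 / G t * ∫ x in (0:ℝ)..t, x * g x

noncomputable def dynamicCumulativeEntropy (G : ℝ → ℝ) (t : ℝ) : ℝ :=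
  -∫ x in (0:ℝ)..t, G x / G t * log (G x / G t)

lemma div_mul_log_div (y : ℝ) {c : ℝ} (hc : c ≠ 0) :
    y / c * log (y / c) = (-negMulLog y - y * log c) / c := by
  rcases eq_or_ne y 0 with rfl | hy
  · simp
  · rw [log_div hy hc, negMulLog]
    ring

lemma dynamicCumulativeEntropy_eq_integral_negMulLog {G : ℝ → ℝ} (hG : Continuous G) {t : ℝ}
    (hGt : G t ≠ 0) :
    dynamicCumulativeEntropy G t
      = ((∫ x in (0:ℝ)..t, negMulLog (G x)) + log (G t) * ∫ x in (0:ℝ)..t, G x) / G t := by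
  have hG_int : IntervalIntegrable G volume 0 t := hG.intervalIntegrable 0 t
  have hnml_int : IntervalIntegrable (fun x => negMulLog (G x)) volume 0 t :=
    (continuous_negMulLog.comp hG).intervalIntegrable 0 t
  simp only [dynamicCumulativeEntropy, div_mul_log_div _ hGt, intervalIntegral.integral_div]
  rw [intervalIntegral.integral_sub (f := fun x => -negMulLog (G x)) hnml_int.neg
      (hG_int.mul_const _),
    intervalIntegral.integral_neg, intervalIntegral.integral_mul_const]
  ring

namespace IsLifetimeCdf

variable {G g : ℝ → ℝ} (h : IsLifetimeCdf G g) {t : ℝ}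
include h

lemma neg_log_nonneg {x : ℝ} (hx : 0 < x) : 0 ≤ -log (G x) :=
  neg_nonneg.2 (log_nonpos (h.pos x hx).le (h.le_one x hx))

lemma next : IsLifetimeCdf (fun x => G x * (1 + -log (G x))) (fun x => -log (G x) * g x) := by
  have hnext : (fun x => G x * (1 + -log (G x))) = fun x => G x + negMulLog (G x) := by
    funext x
    rw [negMulLog]
    ring
  rw [hnext]
  refine ⟨h.continuous.add (continuous_negMulLog.comp h.continuous), by simp [h.map_zero],
    fun x hx => ?_, fun x hx => ?_, fun x hx => ?_, fun x hx => ?_⟩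
  · exact add_pos_of_pos_of_nonneg (h.pos x hx)
      (negMulLog_nonneg (h.pos x hx).le (h.le_one x hx))
  · linarith [negMulLog_le_one_sub_self (h.pos x hx).le]
  · have hG := h.hasDerivAt x hx
    exact (hG.add ((hasDerivAt_negMulLog (h.pos x hx).ne').comp x hG)).congr_deriv (by ring)
  · exact mul_nonneg (h.neg_log_nonneg hx) (h.density_nonneg x hx)

lemma intervalIntegrable_density (ht : 0 ≤ t) : IntervalIntegrable g volume 0 t := by
  apply intervalIntegral.intervalIntegrable_deriv_of_nonneg h.continuous.continuousOn
  all_goals simp only [min_eq_left ht, max_eq_right ht]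
  · exact fun x hx => h.hasDerivAt x hx.1
  · exact fun x hx => h.density_nonneg x hx.1

lemma integral_density (ht : 0 ≤ t) : ∫ x in (0:ℝ)..t, g x = G t := by
  rw [intervalIntegral.integral_eq_sub_of_hasDerivAt_of_le ht h.continuous.continuousOn
    (fun x hx => h.hasDerivAt x hx.1) (h.intervalIntegrable_density ht), h.map_zero, sub_zero]

lemma integral_id_mul_density (ht : 0 ≤ t) :
    ∫ x in (0:ℝ)..t, x * g x = t * G t - ∫ x in (0:ℝ)..t, G x := by
  have hparts := intervalIntegral.integral_mul_deriv_eq_deriv_mul_of_hasDerivAt (a := 0) (b := t)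
    (u' := fun _ => 1) continuousOn_id h.continuous.continuousOn
    (fun x _ => hasDerivAt_id x)
    (fun x hx => h.hasDerivAt x (by simpa [min_eq_left ht] using hx.1))
    intervalIntegrable_const (h.intervalIntegrable_density ht)
  simpa using hparts

lemma integral_id_mul_neg_log_mul_density (ht : 0 < t) :
    ∫ x in (0:ℝ)..t, x * (-log (G x) * g x)
      = G t * (meanPastLifetime G g t * (1 + -log (G t)) - dynamicCumulativeEntropy G t) := by
  have hnext_cdf : ∫ x in (0:ℝ)..t, G x * (1 + -log (G x))
      = (∫ x in (0:ℝ)..t, G x) + ∫ x in (0:ℝ)..t, negMulLog (G x) := by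
    have hnml : IntervalIntegrable (fun x => negMulLog (G x)) volume 0 t :=
      (continuous_negMulLog.comp h.continuous).intervalIntegrable 0 t
    rw [← intervalIntegral.integral_add (h.continuous.intervalIntegrable 0 t) hnml]
    congr with x
    rw [negMulLog]
    ring
  have hGt := (h.pos t ht).ne'
  rw [h.next.integral_id_mul_density ht.le, hnext_cdf, meanPastLifetime,
    h.integral_id_mul_density ht.le,
    dynamicCumulativeEntropy_eq_integral_negMulLog h.continuous hGt]
  field_simp
  ring

lemma conditional_covariance (ht : 0 < t) (m : ℝ) :
    1 / G t * ∫ x in (0:ℝ)..t, (x - m) * (-log (G x) - 1) * g x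
      = -log (G t) * (meanPastLifetime G g t - m) - dynamicCumulativeEntropy G t := by
  have hg := h.intervalIntegrable_density ht.le
  have hTg := h.next.intervalIntegrable_density ht.le
  have hxg : IntervalIntegrable (fun x => x * g x) volume 0 t := hg.continuousOn_mul continuousOn_id
  have hxTg : IntervalIntegrable (fun x => x * (-log (G x) * g x)) volume 0 t :=
    hTg.continuousOn_mul continuousOn_id
  have hexpand : ∫ x in (0:ℝ)..t, (x - m) * (-log (G x) - 1) * g x
      = (∫ x in (0:ℝ)..t, x * (-log (G x) * g x)) - (∫ x in (0:ℝ)..t, x * g x)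
        - m * (∫ x in (0:ℝ)..t, -log (G x) * g x) + m * ∫ x in (0:ℝ)..t, g x := by
    rw [← intervalIntegral.integral_const_mul, ← intervalIntegral.integral_const_mul,
      ← intervalIntegral.integral_sub hxTg hxg,
      ← intervalIntegral.integral_sub (hxTg.sub hxg) (hTg.const_mul m),
      ← intervalIntegral.integral_add ((hxTg.sub hxg).sub (hTg.const_mul m)) (hg.const_mul m)]
    congr with x
    ring
  have hGt := (h.pos t ht).ne'
  rw [hexpand, h.integral_id_mul_neg_log_mul_density ht, h.next.integral_density ht.le,
    h.integral_density ht.le, meanPastLifetime]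
  field_simp
  ring

end IsLifetimeCdf

theorem seq_conditional_covariance_general
    (F f : ℝ → ℝ) (Fn fn : ℕ → ℝ → ℝ)
    (hFcont : Continuous F)
    (hderiv : ∀ x, 0 < x → HasDerivAt F (f x) x)
    (hf : ∀ x, 0 ≤ f x)
    (hF0 : F 0 = 0)
    (hFpos : ∀ x, 0 < x → 0 < F x)
    (hFle : ∀ x, F x ≤ 1)
    (hF1 : ∀ x, Fn 1 x = F x)
    (hf1 : ∀ x, fn 1 x = f x)
    (hFrec : ∀ n, 1 ≤ n → ∀ x, Fn (n + 1) x = Fn n x * (1 + (-Real.log (Fn n x))))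
    (hfrec : ∀ n, 1 ≤ n → ∀ x, fn (n + 1) x = (-Real.log (Fn n x)) * fn n x) :
    ∀ t, 0 < t → ∀ n, 1 ≤ n →
      (1 / Fn n t) *
          (∫ x in (0:ℝ)..t,
            (x - ∫ y in Ioi 0, y * fn n y) * ((-Real.log (Fn n x)) - 1) * fn n x)
        = (-Real.log (Fn n t)) *
              ((1 / Fn n t) * (∫ x in (0:ℝ)..t, x * fn n x)
                - ∫ y in Ioi 0, y * fn n y)
            - (-(∫ x in (0:ℝ)..t, (Fn n x / Fn n t) * Real.log (Fn n x / Fn n t))) := by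
  have hseq : ∀ n, 1 ≤ n → IsLifetimeCdf (Fn n) (fn n) := by
    intro n hn
    induction n, hn using Nat.le_induction with
    | base =>
      rw [show Fn 1 = F from funext hF1, show fn 1 = f from funext hf1]
      exact ⟨hFcont, hF0, hFpos, fun x _ => hFle x, hderiv, fun x _ => hf x⟩
    | succ n hn hFn =>
      rw [show Fn (n + 1) = _ from funext (hFrec n hn),
        show fn (n + 1) = _ from funext (hfrec n hn)]
      exact hFn.next
  intro t ht n hn
  exact (hseq n hn).conditional_covariance ht _

/-- For every `t > 0` and `n ≥ 1`, the conditional covariance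
`Cov[X_n, T_n(X_n) | X_n ≤ t] = E[(X_n - E(X_n))(T_n(X_n) - 1) | X_n ≤ t]`
(using `E(T_n(X_n)) = 1`) satisfies
`Cov[X_n, T_n(X_n) | X_n ≤ t] = T_n(t)(μ_n(t) - E(X_n)) - CE(X_n; t)`,
where `μ_n(t) = (1/F_n(t)) ∫_0^t x f_n(x) dx` and
`CE(X_n; t) = -∫_0^t (F_n(x)/F_n(t)) log (F_n(x)/F_n(t)) dx`. -/
theorem seq_conditional_covariance
    (F f : ℝ → ℝ) (Fn fn : ℕ → ℝ → ℝ)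
    (hFcont : Continuous F)
    (hderiv : ∀ x, 0 < x → HasDerivAt F (f x) x)
    (hf : ∀ x, 0 ≤ f x) (hfm : Measurable f)
    (hF0 : F 0 = 0)
    (hFmono : Monotone F)
    (hFpos : ∀ x, 0 < x → 0 < F x)
    (hFle : ∀ x, F x ≤ 1)
    (hF1 : ∀ x, Fn 1 x = F x)
    (hf1 : ∀ x, fn 1 x = f x)
    (hFrec : ∀ n, 1 ≤ n → ∀ x, Fn (n + 1) x = Fn n x * (1 + (-Real.log (Fn n x))))
    (hfrec : ∀ n, 1 ≤ n → ∀ x, fn (n + 1) x = (-Real.log (Fn n x)) * fn n x)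
    (hmean : ∀ n, 1 ≤ n → IntegrableOn (fun x => x * fn n x) (Ioi 0)) :
    ∀ t, 0 < t → ∀ n, 1 ≤ n →
      (1 / Fn n t) *
          (∫ x in (0:ℝ)..t,
            (x - ∫ y in Ioi 0, y * fn n y) * ((-Real.log (Fn n x)) - 1) * fn n x)
        = (-Real.log (Fn n t)) *
              ((1 / Fn n t) * (∫ x in (0:ℝ)..t, x * fn n x)
                - ∫ y in Ioi 0, y * fn n y)
            - (-(∫ x in (0:ℝ)..t, (Fn n x / Fn n t) * Real.log (Fn n x / Fn n t))) :=
  seq_conditional_covariance_general F f Fn fn hFcont hderiv hf hF0 hFpos hFle hF1 hf1 hFrec hfrec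
end

section
/- Let X be an absolutely continuous nonnegative random variable with finite mean, pdf f, cdf F with F(x) > 0 for all x > 0, reversed hazard rate τ(x) = f(x)/F(x), cumulative reversed hazard rate T(x) = −log F(x), and finite cumulative entropy CE(X) = −∫_0^∞ F(x)·log F(x) dx. Then E[T(X)/τ(X)] = ∫_0^∞ (T(x)/τ(x))·f(x) dx = CE(X), and Cov(X, T(X)) = E[X·T(X)] − E[X]·E[T(X)] = −CE(X). -/
/-!
With `T = -log F`, the integrand `(T / τ) f` is pointwise `T F`, which gives the first identity.
For the second, `G = F - F log F` has `G' = T f`, so `E[T(X)] = G(∞) - G(0) = 1`; and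
`(x F log F)' = F log F - x T f + x f`, whose integral over `(0, ∞)` vanishes because
`x F |log F| ≤ x (1 - F(x)) ≤ ∫_x^∞ t f(t) dt → 0`.
Hence `E[X T(X)] - E[X] = ∫ F log F = -CE(X)`.
-/

open MeasureTheory Set Filter Real Topology

theorem tendsto_setIntegral_Ioi_atTop_zero {g : ℝ → ℝ} {a : ℝ}
    (hg : IntegrableOn g (Ioi a)) :
    Tendsto (fun b => ∫ x in Ioi b, g x) atTop (𝓝 0) := by
  have hempty : ⋂ b : ℝ, Ioi b = ∅ :=
    eq_empty_of_forall_notMem fun x hx => lt_irrefl x (mem_iInter.mp hx x)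
  simpa [hempty] using tendsto_setIntegral_of_antitone (μ := volume)
    (fun _ => measurableSet_Ioi) (fun _ _ hbc => Ioi_subset_Ioi hbc) ⟨a, hg⟩

section

variable {F f : ℝ → ℝ}

theorem one_sub_eq_setIntegral_Ioi (hFcont : Continuous F)
    (hderiv : ∀ x, 0 < x → HasDerivAt F (f x) x) (hf : ∀ x, 0 < x → 0 ≤ f x)
    (hFlim : Tendsto F atTop (𝓝 1)) {a : ℝ} (ha : 0 ≤ a) :
    1 - F a = ∫ x in Ioi a, f x :=
  (integral_Ioi_of_hasDerivAt_of_nonneg hFcont.continuousWithinAt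
    (fun x hx => hderiv x (ha.trans_lt hx)) (fun x hx => hf x (ha.trans_lt hx)) hFlim).symm

theorem le_one_of_tendsto_atTop_one (hFcont : Continuous F)
    (hderiv : ∀ x, 0 < x → HasDerivAt F (f x) x) (hf : ∀ x, 0 < x → 0 ≤ f x)
    (hFlim : Tendsto F atTop (𝓝 1)) {a : ℝ} (ha : 0 ≤ a) : F a ≤ 1 := by
  have h : 0 ≤ ∫ x in Ioi a, f x :=
    setIntegral_nonneg measurableSet_Ioi fun x hx => hf x (ha.trans_lt hx)
  linarith [one_sub_eq_setIntegral_Ioi hFcont hderiv hf hFlim ha]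

theorem mul_one_sub_le_setIntegral_Ioi (hFcont : Continuous F)
    (hderiv : ∀ x, 0 < x → HasDerivAt F (f x) x) (hf : ∀ x, 0 < x → 0 ≤ f x)
    (hFlim : Tendsto F atTop (𝓝 1)) (hmean : IntegrableOn (fun x => x * f x) (Ioi 0))
    {a : ℝ} (ha : 0 ≤ a) :
    a * (1 - F a) ≤ ∫ x in Ioi a, x * f x := by
  rw [one_sub_eq_setIntegral_Ioi hFcont hderiv hf hFlim ha, ← integral_const_mul]
  refine integral_mono_of_nonneg ?_ (hmean.mono_set (Ioi_subset_Ioi ha)) ?_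
  · filter_upwards [ae_restrict_mem measurableSet_Ioi] with x hx
    exact mul_nonneg ha (hf x (ha.trans_lt hx))
  · filter_upwards [ae_restrict_mem measurableSet_Ioi] with x hx
    exact mul_le_mul_of_nonneg_right (le_of_lt hx) (hf x (ha.trans_lt hx))

theorem tendsto_mul_mul_log_atTop_zero (hFcont : Continuous F)
    (hderiv : ∀ x, 0 < x → HasDerivAt F (f x) x) (hf : ∀ x, 0 < x → 0 ≤ f x)
    (hFpos : ∀ x, 0 < x → 0 < F x) (hFlim : Tendsto F atTop (𝓝 1))
    (hmean : IntegrableOn (fun x => x * f x) (Ioi 0)) :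
    Tendsto (fun x => x * (F x * log (F x))) atTop (𝓝 0) := by
  refine squeeze_zero_norm' ?_ (tendsto_setIntegral_Ioi_atTop_zero hmean)
  filter_upwards [eventually_gt_atTop 0] with x hx
  have hF1 := le_one_of_tendsto_atTop_one hFcont hderiv hf hFlim hx.le
  have hFlog : |F x * log (F x)| ≤ 1 - F x := by
    rw [abs_of_nonpos (mul_log_nonpos (hFpos x hx).le hF1)]
    linarith [self_sub_one_le_mul_log (hFpos x hx).le]
  calc ‖x * (F x * log (F x))‖ = x * |F x * log (F x)| := by
        rw [norm_mul, Real.norm_of_nonneg hx.le, Real.norm_eq_abs]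
    _ ≤ x * (1 - F x) := mul_le_mul_of_nonneg_left hFlog hx.le
    _ ≤ ∫ t in Ioi x, t * f t :=
        mul_one_sub_le_setIntegral_Ioi hFcont hderiv hf hFlim hmean hx.le

theorem hasDerivAt_self_sub_mul_log_comp {x : ℝ} (hF : HasDerivAt F (f x) x)
    (hx : F x ≠ 0) :
    HasDerivAt (fun y => F y - F y * log (F y)) (-log (F x) * f x) x :=
  (hF.sub ((hasDerivAt_mul_log hx).comp x hF)).congr_deriv (by ring)

theorem neg_log_nonneg (hFcont : Continuous F)
    (hderiv : ∀ x, 0 < x → HasDerivAt F (f x) x) (hf : ∀ x, 0 < x → 0 ≤ f x)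
    (hFpos : ∀ x, 0 < x → 0 < F x) (hFlim : Tendsto F atTop (𝓝 1)) {x : ℝ} (hx : 0 < x) :
    0 ≤ -log (F x) :=
  neg_nonneg.mpr (log_nonpos (hFpos x hx).le
    (le_one_of_tendsto_atTop_one hFcont hderiv hf hFlim hx.le))

theorem integrableOn_neg_log_mul (hFcont : Continuous F)
    (hderiv : ∀ x, 0 < x → HasDerivAt F (f x) x) (hf : ∀ x, 0 < x → 0 ≤ f x)
    (hFpos : ∀ x, 0 < x → 0 < F x) (hFlim : Tendsto F atTop (𝓝 1)) :
    IntegrableOn (fun x => -log (F x) * f x) (Ioi 0) :=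
  integrableOn_Ioi_deriv_of_nonneg (g := fun x => F x - F x * log (F x))
    (hFcont.sub hFcont.mul_log).continuousWithinAt
    (fun x hx => hasDerivAt_self_sub_mul_log_comp (hderiv x hx) (hFpos x hx).ne')
    (fun x hx => mul_nonneg (neg_log_nonneg hFcont hderiv hf hFpos hFlim hx) (hf x hx))
    (by simpa using hFlim.sub (hFlim.mul (hFlim.log one_ne_zero)))

theorem setIntegral_neg_log_mul_eq_one (hFcont : Continuous F)
    (hderiv : ∀ x, 0 < x → HasDerivAt F (f x) x) (hf : ∀ x, 0 < x → 0 ≤ f x)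
    (hF0 : F 0 = 0) (hFpos : ∀ x, 0 < x → 0 < F x) (hFlim : Tendsto F atTop (𝓝 1)) :
    ∫ x in Ioi 0, -log (F x) * f x = 1 := by
  rw [integral_Ioi_of_hasDerivAt_of_nonneg (g := fun x => F x - F x * log (F x))
    (hFcont.sub hFcont.mul_log).continuousWithinAt
    (fun x hx => hasDerivAt_self_sub_mul_log_comp (hderiv x hx) (hFpos x hx).ne')
    (fun x hx => mul_nonneg (neg_log_nonneg hFcont hderiv hf hFpos hFlim hx) (hf x hx))
    (by simpa using hFlim.sub (hFlim.mul (hFlim.log one_ne_zero)))]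
  simp [hF0]

theorem integrableOn_mul_neg_log_mul (hFcont : Continuous F)
    (hderiv : ∀ x, 0 < x → HasDerivAt F (f x) x) (hf : ∀ x, 0 < x → 0 ≤ f x)
    (hFpos : ∀ x, 0 < x → 0 < F x) (hFlim : Tendsto F atTop (𝓝 1))
    (hmean : IntegrableOn (fun x => x * f x) (Ioi 0)) :
    IntegrableOn (fun x => x * (-log (F x) * f x)) (Ioi 0) := by
  have hT := integrableOn_neg_log_mul hFcont hderiv hf hFpos hFlim
  have hmono : MonotoneOn F (Ioi 0) := by
    refine monotoneOn_of_hasDerivWithinAt_nonneg (f' := f) (convex_Ioi 0) hFcont.continuousOn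
      ?_ ?_ <;> rw [interior_Ioi]
    exacts [fun x hx => (hderiv x hx).hasDerivWithinAt, hf]
  refine Integrable.mono' (hT.add (hmean.const_mul (-log (F 1))))
    (continuous_id.aestronglyMeasurable.mul hT.aestronglyMeasurable) ?_
  -- `T` is antitone: bound `x T f` by `T f` on `(0, 1]` and by `T(1) x f` on `[1, ∞)`.
  filter_upwards [ae_restrict_mem measurableSet_Ioi] with x hx
  have hTf := mul_nonneg (neg_log_nonneg hFcont hderiv hf hFpos hFlim hx) (hf x hx)
  rw [Real.norm_of_nonneg (mul_nonneg hx.le hTf)]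
  rcases le_total x 1 with hx1 | hx1
  · have hT1f : 0 ≤ -log (F 1) * (x * f x) :=
      mul_nonneg (neg_log_nonneg hFcont hderiv hf hFpos hFlim one_pos)
        (mul_nonneg hx.le (hf x hx))
    calc x * (-log (F x) * f x) ≤ -log (F x) * f x := mul_le_of_le_one_left hTf hx1
      _ ≤ _ := le_add_of_nonneg_right hT1f
  · have hTx : -log (F x) ≤ -log (F 1) :=
      neg_le_neg (log_le_log (hFpos 1 one_pos) (hmono (mem_Ioi.2 one_pos) hx hx1))
    calc x * (-log (F x) * f x) = -log (F x) * (x * f x) := by ring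
      _ ≤ -log (F 1) * (x * f x) := mul_le_mul_of_nonneg_right hTx (mul_nonneg hx.le (hf x hx))
      _ ≤ _ := le_add_of_nonneg_left hTf

theorem setIntegral_mul_neg_log_mul_sub (hFcont : Continuous F)
    (hderiv : ∀ x, 0 < x → HasDerivAt F (f x) x) (hf : ∀ x, 0 < x → 0 ≤ f x)
    (hFpos : ∀ x, 0 < x → 0 < F x) (hFlim : Tendsto F atTop (𝓝 1))
    (hmean : IntegrableOn (fun x => x * f x) (Ioi 0))
    (hCE : IntegrableOn (fun x => F x * log (F x)) (Ioi 0)) :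
    (∫ x in Ioi 0, x * (-log (F x) * f x)) - ∫ x in Ioi 0, x * f x
      = ∫ x in Ioi 0, F x * log (F x) := by
  have hXT := integrableOn_mul_neg_log_mul hFcont hderiv hf hFpos hFlim hmean
  have hderiv' : ∀ x ∈ Ioi 0, HasDerivAt (fun y => y * (F y * log (F y)))
      (F x * log (F x) - x * (-log (F x) * f x) + x * f x) x := fun x hx =>
    ((hasDerivAt_id x).mul ((hasDerivAt_mul_log (hFpos x hx).ne').comp x (hderiv x hx)))
      |>.congr_deriv (by simp only [id, one_mul, Function.comp]; ring)
  have hsub : IntegrableOn (fun x => F x * log (F x) - x * (-log (F x) * f x)) (Ioi 0) :=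
    hCE.sub hXT
  have hIBP := integral_Ioi_of_hasDerivAt_of_tendsto (f := fun y => y * (F y * log (F y)))
    (continuous_id.mul hFcont.mul_log).continuousWithinAt hderiv' (hsub.add hmean)
    (tendsto_mul_mul_log_atTop_zero hFcont hderiv hf hFpos hFlim hmean)
  rw [integral_add hsub hmean, integral_sub hCE hXT] at hIBP
  simp only [zero_mul, sub_zero] at hIBP
  linarith

end

theorem ce_as_expectation_and_covariance_general
    (F f : ℝ → ℝ)
    (hFcont : Continuous F)
    (hderiv : ∀ x, 0 < x → HasDerivAt F (f x) x)
    (hfpos : ∀ x, 0 < x → 0 < f x)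
    (hF0 : F 0 = 0)
    (hFpos : ∀ x, 0 < x → 0 < F x)
    (hFlim : Tendsto F atTop (nhds 1))
    (hmean : IntegrableOn (fun x => x * f x) (Ioi 0))
    (hCE : IntegrableOn (fun x => F x * Real.log (F x)) (Ioi 0)) :
    (∫ x in Ioi 0, ((-Real.log (F x)) / (f x / F x)) * f x
        = -∫ x in Ioi 0, F x * Real.log (F x))
    ∧ ((∫ x in Ioi 0, x * ((-Real.log (F x)) * f x))
          - (∫ x in Ioi 0, x * f x) * (∫ x in Ioi 0, (-Real.log (F x)) * f x)
        = -(-∫ x in Ioi 0, F x * Real.log (F x))) := by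
  have hf : ∀ x, 0 < x → 0 ≤ f x := fun x hx => (hfpos x hx).le
  constructor
  · rw [← integral_neg]
    refine setIntegral_congr_fun measurableSet_Ioi fun x hx => ?_
    rw [div_div_eq_mul_div, div_mul_cancel₀ _ (hfpos x hx).ne']
    ring
  · rw [setIntegral_neg_log_mul_eq_one hFcont hderiv hf hF0 hFpos hFlim, mul_one, neg_neg,
      setIntegral_mul_neg_log_mul_sub hFcont hderiv hf hFpos hFlim hmean hCE]

/-- For `X` with reversed hazard rate `τ = f/F`, cumulative reversed hazard
rate `T = -log F`, and finite cumulative entropy `CE(X) = -∫_0^∞ F log F`, one has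
`E[T(X)/τ(X)] = CE(X)` and `Cov(X, T(X)) = E[X T(X)] - E[X] E[T(X)] = -CE(X)`. -/
theorem ce_as_expectation_and_covariance
    (F f : ℝ → ℝ)
    (hFcont : Continuous F)
    (hderiv : ∀ x, 0 < x → HasDerivAt F (f x) x)
    (hf : ∀ x, 0 ≤ f x) (hfm : Measurable f)
    (hfpos : ∀ x, 0 < x → 0 < f x)
    (hF0 : F 0 = 0)
    (hFpos : ∀ x, 0 < x → 0 < F x)
    (hFle : ∀ x, F x ≤ 1)
    (hFlim : Tendsto F atTop (nhds 1))
    (hmean : IntegrableOn (fun x => x * f x) (Ioi 0))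
    (hCE : IntegrableOn (fun x => F x * Real.log (F x)) (Ioi 0)) :
    (∫ x in Ioi 0, ((-Real.log (F x)) / (f x / F x)) * f x
        = -∫ x in Ioi 0, F x * Real.log (F x))
    ∧ ((∫ x in Ioi 0, x * ((-Real.log (F x)) * f x))
          - (∫ x in Ioi 0, x * f x) * (∫ x in Ioi 0, (-Real.log (F x)) * f x)
        = -(-∫ x in Ioi 0, F x * Real.log (F x))) :=
  ce_as_expectation_and_covariance_general F f hFcont hderiv hfpos hF0 hFpos hFlim hmean hCE
end

section
/- Let X be an absolutely continuous nonnegative random variable with pdf f and cdf F with F(x) > 0 for all x > 0, and define the sequence F_1 = F, f_1 = f, T_n(x) = −log F_n(x), F_{n+1}(x) = F_n(x)(1 + T_n(x)), f_{n+1}(x) = T_n(x)·f_n(x), with reversed hazard rate τ_n(x) = f_n(x)/F_n(x). For s ∈ ℝ and an integrable function h define the operator T̃_s h(t) = ∫_0^t e^{−s(t−x)}·h(x) dx for t > 0. Then for every t > 0, every n ≥ 1 and every s ∈ ℝ: T̃_s F_{n+1}(t) = (1 + T_n(t))·T̃_s F_n(t) + ∫_0^t e^{−s(t−u)}·τ_n(u)·T̃_s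 F_n(u) du. -/
/-!
With `A(u) = ∫_0^u e^{sx} F_n(x) dx` one has `T̃_s F_n(u) = e^{-su} A(u)`, and since
`F_{n+1} = F_n + T_n F_n` the claim reduces to the integration by parts
`∫_0^t T_n(u) e^{su} F_n(u) du = T_n(t) A(t) + ∫_0^t τ_n(u) A(u) du`
(`T_n' = -τ_n`, `A' = e^{su} F_n`). As `F_n` increases, `|A(u)| ≤ C u F_n(u)`; together with
`T_n F_n = -F_n log F_n ≤ 1` this kills the boundary term at `0`, and it bounds `τ_n A` by
`C t f_n`, which is integrable as the derivative of the increasing `F_n`.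
-/

open MeasureTheory Set Filter

/-- The operator dual to the Dickson–Hipp operator:
`T̃_s h(t) = ∫_0^t e^{-s(t-x)} h(x) dx`. -/
noncomputable def Ttilde (s : ℝ) (h : ℝ → ℝ) (t : ℝ) : ℝ :=
  ∫ x in (0:ℝ)..t, Real.exp (-(s * (t - x))) * h x

open Real Topology

/-- Continuity is asked on all of `ℝ`, in particular at `0` where `G` may vanish; it survives
`G ↦ G (1 - log G)` because `y ↦ y log y` is continuous. -/
structure IsCdfWithDensity (G g : ℝ → ℝ) : Prop where
  continuous : Continuous G
  hasDerivAt : ∀ x, 0 < x → HasDerivAt G (g x) x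
  pos : ∀ x, 0 < x → 0 < G x
  le_one : ∀ x, 0 < x → G x ≤ 1
  density_nonneg : ∀ x, 0 < x → 0 ≤ g x

lemma Ttilde_eq_exp_mul_integral (s : ℝ) (h : ℝ → ℝ) (t : ℝ) :
    Ttilde s h t = exp (-(s * t)) * ∫ x in (0:ℝ)..t, exp (s * x) * h x := by
  rw [Ttilde, ← intervalIntegral.integral_const_mul]
  refine intervalIntegral.integral_congr fun x _ => ?_
  rw [← mul_assoc, ← exp_add]
  ring_nf

lemma continuous_neg_log_mul_mul {G w : ℝ → ℝ} (hG : Continuous G) (hw : Continuous w) :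
    Continuous fun x => -log (G x) * (w x * G x) := by
  have : Continuous fun x => -(w x * (G x * log (G x))) :=
    (hw.mul (continuous_mul_log.comp hG)).neg
  exact this.congr fun x => by ring

namespace IsCdfWithDensity

variable {G g : ℝ → ℝ} (hG : IsCdfWithDensity G g)
include hG

lemma neg_log_nonneg {x : ℝ} (hx : 0 < x) : 0 ≤ -log (G x) :=
  neg_nonneg.2 (log_nonpos (hG.pos x hx).le (hG.le_one x hx))

lemma neg_log_mul_le_one_sub {x : ℝ} (hx : 0 < x) : -log (G x) * G x ≤ 1 - G x := by
  have := self_sub_one_le_mul_log (hG.pos x hx).le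
  linarith

lemma next :
    IsCdfWithDensity (fun x => G x * (1 + -log (G x))) (fun x => -log (G x) * g x) where
  continuous := by
    have : Continuous fun x => G x - G x * log (G x) :=
      hG.continuous.sub (continuous_mul_log.comp hG.continuous)
    exact this.congr fun x => by ring
  hasDerivAt x hx := by
    have hGx := hG.pos x hx
    have hlog : HasDerivAt (fun y => 1 + -log (G y)) (-(g x / G x)) x :=
      ((hG.hasDerivAt x hx).log hGx.ne').neg.const_add 1
    refine ((hG.hasDerivAt x hx).mul hlog).congr_deriv ?_
    field_simp
    ring
  pos x hx := mul_pos (hG.pos x hx) (by linarith [hG.neg_log_nonneg hx])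
  le_one x hx := by linarith [hG.neg_log_mul_le_one_sub hx]
  density_nonneg x hx := mul_nonneg (hG.neg_log_nonneg hx) (hG.density_nonneg x hx)

lemma monotoneOn : MonotoneOn G (Ici 0) := by
  refine monotoneOn_of_deriv_nonneg (convex_Ici 0) hG.continuous.continuousOn ?_ ?_ <;>
    rw [interior_Ici]
  · exact fun x hx => (hG.hasDerivAt x hx).differentiableAt.differentiableWithinAt
  · intro x hx
    rw [(hG.hasDerivAt x hx).deriv]
    exact hG.density_nonneg x hx

lemma integrableOn_density (t : ℝ) : IntegrableOn g (Ioc 0 t) :=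
  intervalIntegral.integrableOn_deriv_of_nonneg hG.continuous.continuousOn
    (fun x hx => hG.hasDerivAt x hx.1) (fun x hx => hG.density_nonneg x hx.1)

variable {w : ℝ → ℝ}

lemma norm_integral_mul_le {u M : ℝ} (hu : 0 ≤ u) (hM : ∀ x ∈ Ioc 0 u, ‖w x‖ ≤ M) :
    ‖∫ x in (0:ℝ)..u, w x * G x‖ ≤ M * G u * u := by
  have hbound : ∀ x ∈ uIoc 0 u, ‖w x * G x‖ ≤ M * G u := by
    intro x hx
    rw [uIoc_of_le hu] at hx
    rw [norm_mul, Real.norm_of_nonneg (hG.pos x hx.1).le]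
    exact mul_le_mul (hM x hx) (hG.monotoneOn hx.1.le hu hx.2) (hG.pos x hx.1).le
      ((norm_nonneg _).trans (hM x hx))
  simpa [abs_of_nonneg hu] using intervalIntegral.norm_integral_le_of_norm_le_const hbound

lemma tendsto_neg_log_mul_integral_nhdsGT_zero (hw : Continuous w) :
    Tendsto (fun u => -log (G u) * ∫ x in (0:ℝ)..u, w x * G x) (𝓝[>] 0) (𝓝 0) := by
  obtain ⟨M, hM⟩ := isCompact_Icc.exists_bound_of_continuousOn (s := Icc (0:ℝ) 1) hw.continuousOn
  have hM0 : 0 ≤ M := (norm_nonneg _).trans (hM 0 ⟨le_rfl, zero_le_one⟩)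
  have hlin : Tendsto (fun u => M * u) (𝓝[>] 0) (𝓝 0) :=
    ((continuous_const_mul M).tendsto' 0 0 (mul_zero M)).mono_left nhdsWithin_le_nhds
  refine squeeze_zero_norm' ?_ hlin
  filter_upwards [Ioo_mem_nhdsGT one_pos] with u hu
  have hA := hG.norm_integral_mul_le hu.1.le fun x hx => hM x ⟨hx.1.le, hx.2.trans hu.2.le⟩
  have hT := hG.neg_log_nonneg hu.1
  calc ‖-log (G u) * ∫ x in (0:ℝ)..u, w x * G x‖
      ≤ -log (G u) * (M * G u * u) := by
        rw [norm_mul, Real.norm_of_nonneg hT]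
        exact mul_le_mul_of_nonneg_left hA hT
    _ = M * u * (-log (G u) * G u) := by ring
    _ ≤ M * u * 1 := by
        refine mul_le_mul_of_nonneg_left ?_ (mul_nonneg hM0 hu.1.le)
        linarith [hG.neg_log_mul_le_one_sub hu.1, hG.pos u hu.1]
    _ = M * u := mul_one _

lemma continuous_integral_mul (hw : Continuous w) :
    Continuous fun u => ∫ x in (0:ℝ)..u, w x * G x :=
  continuous_iff_continuousAt.2 fun u =>
    ((hw.mul hG.continuous).integral_hasStrictDerivAt 0 u).hasDerivAt.continuousAt

lemma intervalIntegrable_div_mul_integral (hw : Continuous w) {t : ℝ} (ht : 0 ≤ t) :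
    IntervalIntegrable (fun u => g u / G u * ∫ x in (0:ℝ)..u, w x * G x) volume 0 t := by
  obtain ⟨M, hM⟩ := isCompact_Icc.exists_bound_of_continuousOn (s := Icc 0 t) hw.continuousOn
  rw [intervalIntegrable_iff_integrableOn_Ioc_of_le ht]
  refine ((hG.integrableOn_density t).const_mul (M * t)).mono' ?_ ?_
  · exact (((hG.integrableOn_density t).aemeasurable.div hG.continuous.aemeasurable).mul
      (hG.continuous_integral_mul hw).aemeasurable).aestronglyMeasurable
  filter_upwards [ae_restrict_mem measurableSet_Ioc] with u hu
  have hA := hG.norm_integral_mul_le hu.1.le fun x hx => hM x ⟨hx.1.le, hx.2.trans hu.2⟩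
  have hτ : 0 ≤ g u / G u := div_nonneg (hG.density_nonneg u hu.1) (hG.pos u hu.1).le
  calc ‖g u / G u * ∫ x in (0:ℝ)..u, w x * G x‖
      ≤ g u / G u * (M * G u * u) := by
        rw [norm_mul, Real.norm_of_nonneg hτ]
        exact mul_le_mul_of_nonneg_left hA hτ
    _ = M * u * g u := by field_simp [(hG.pos u hu.1).ne']
    _ ≤ M * t * g u := by
        have hM0 : 0 ≤ M := (norm_nonneg _).trans (hM u ⟨hu.1.le, hu.2⟩)
        gcongr
        · exact hG.density_nonneg u hu.1
        · exact hu.2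

theorem integral_neg_log_mul_mul (hw : Continuous w) {t : ℝ} (ht : 0 < t) :
    ∫ u in (0:ℝ)..t, -log (G u) * (w u * G u)
      = -log (G t) * (∫ x in (0:ℝ)..t, w x * G x)
        + ∫ u in (0:ℝ)..t, g u / G u * ∫ x in (0:ℝ)..u, w x * G x := by
  have hA : ∀ u, HasDerivAt (fun u => ∫ x in (0:ℝ)..u, w x * G x) (w u * G u) u := fun u =>
    ((hw.mul hG.continuous).integral_hasStrictDerivAt 0 u).hasDerivAt
  have hT : ∀ u, 0 < u → HasDerivAt (fun u => -log (G u)) (-(g u / G u)) u := fun u hu =>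
    ((hG.hasDerivAt u hu).log (hG.pos u hu).ne').neg
  have hint₁ : IntervalIntegrable (fun u => -log (G u) * (w u * G u)) volume 0 t :=
    (continuous_neg_log_mul_mul hG.continuous hw).intervalIntegrable 0 t
  have hint₂ := hG.intervalIntegrable_div_mul_integral hw ht.le
  have hftc := intervalIntegral.integral_eq_sub_of_hasDerivAt_of_tendsto ht
    (fun u hu => ((hT u hu.1).mul (hA u)).congr_deriv (by ring)) (hint₁.sub hint₂)
    (hG.tendsto_neg_log_mul_integral_nhdsGT_zero hw)
    (((hT t ht).continuousAt.mul (hA t).continuousAt).tendsto.mono_left nhdsWithin_le_nhds)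
  rw [intervalIntegral.integral_sub hint₁ hint₂, Pi.mul_apply] at hftc
  linarith

theorem Ttilde_next (s : ℝ) {t : ℝ} (ht : 0 < t) :
    Ttilde s (fun x => G x * (1 + -log (G x))) t
      = (1 + -log (G t)) * Ttilde s G t
        + ∫ u in (0:ℝ)..t, exp (-(s * (t - u))) * ((g u / G u) * Ttilde s G u) := by
  have hw : Continuous fun x => exp (s * x) := by fun_prop
  have hsplit : ∫ x in (0:ℝ)..t, exp (s * x) * (G x * (1 + -log (G x)))
      = (∫ x in (0:ℝ)..t, exp (s * x) * G x)
        + ∫ x in (0:ℝ)..t, -log (G x) * (exp (s * x) * G x) := by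
    have hwG : Continuous fun x => exp (s * x) * G x := hw.mul hG.continuous
    rw [← intervalIntegral.integral_add (hwG.intervalIntegrable 0 t)
      ((continuous_neg_log_mul_mul hG.continuous hw).intervalIntegrable 0 t)]
    exact intervalIntegral.integral_congr fun x _ => by ring
  have hconv : ∫ u in (0:ℝ)..t, exp (-(s * (t - u))) * ((g u / G u) * Ttilde s G u)
      = exp (-(s * t)) * ∫ u in (0:ℝ)..t, g u / G u * ∫ x in (0:ℝ)..u, exp (s * x) * G x := by
    rw [← intervalIntegral.integral_const_mul]
    refine intervalIntegral.integral_congr fun u _ => ?_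
    have hexp : exp (-(s * (t - u))) * exp (-(s * u)) = exp (-(s * t)) := by
      rw [← exp_add]
      ring_nf
    rw [Ttilde_eq_exp_mul_integral, ← hexp]
    ring
  rw [hconv, Ttilde_eq_exp_mul_integral, Ttilde_eq_exp_mul_integral, hsplit,
    hG.integral_neg_log_mul_mul hw ht]
  ring

end IsCdfWithDensity

theorem Ttilde_recursion_general
    (F f : ℝ → ℝ) (Fn fn : ℕ → ℝ → ℝ)
    (hFcont : Continuous F)
    (hderiv : ∀ x, 0 < x → HasDerivAt F (f x) x)
    (hf : ∀ x, 0 ≤ f x)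
    (hFpos : ∀ x, 0 < x → 0 < F x)
    (hFle : ∀ x, F x ≤ 1)
    (hF1 : ∀ x, Fn 1 x = F x)
    (hf1 : ∀ x, fn 1 x = f x)
    (hFrec : ∀ n, 1 ≤ n → ∀ x, Fn (n + 1) x = Fn n x * (1 + (-Real.log (Fn n x))))
    (hfrec : ∀ n, 1 ≤ n → ∀ x, fn (n + 1) x = (-Real.log (Fn n x)) * fn n x) :
    ∀ t, 0 < t → ∀ n, 1 ≤ n → ∀ s : ℝ,
      Ttilde s (Fn (n + 1)) t
        = (1 + (-Real.log (Fn n t))) * Ttilde s (Fn n) t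
            + ∫ u in (0:ℝ)..t,
                Real.exp (-(s * (t - u))) * ((fn n u / Fn n u) * Ttilde s (Fn n) u) := by
  intro t ht n hn s
  have hcdf : IsCdfWithDensity (Fn n) (fn n) := by
    induction n, hn using Nat.le_induction with
    | base =>
      rw [funext hF1, funext hf1]
      exact ⟨hFcont, hderiv, hFpos, fun x _ => hFle x, fun x _ => hf x⟩
    | succ m hm ih =>
      rw [funext (hFrec m hm), funext (hfrec m hm)]
      exact ih.next
  rw [funext (hFrec n hn)]
  exact hcdf.Ttilde_next s ht

/-- For every `t > 0`, `n ≥ 1` and `s ∈ ℝ`,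
`T̃_s F_{n+1}(t) = (1 + T_n(t)) T̃_s F_n(t) + ∫_0^t e^{-s(t-u)} τ_n(u) T̃_s F_n(u) du`,
where `τ_n = f_n/F_n` and `T_n = -log F_n`. -/
theorem Ttilde_recursion
    (F f : ℝ → ℝ) (Fn fn : ℕ → ℝ → ℝ)
    (hFcont : Continuous F) (hfcont : Continuous f)
    (hderiv : ∀ x, 0 < x → HasDerivAt F (f x) x)
    (hf : ∀ x, 0 ≤ f x)
    (hFmono : Monotone F)
    (hFpos : ∀ x, 0 < x → 0 < F x)
    (hFle : ∀ x, F x ≤ 1)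
    (hF1 : ∀ x, Fn 1 x = F x)
    (hf1 : ∀ x, fn 1 x = f x)
    (hFrec : ∀ n, 1 ≤ n → ∀ x, Fn (n + 1) x = Fn n x * (1 + (-Real.log (Fn n x))))
    (hfrec : ∀ n, 1 ≤ n → ∀ x, fn (n + 1) x = (-Real.log (Fn n x)) * fn n x) :
    ∀ t, 0 < t → ∀ n, 1 ≤ n → ∀ s : ℝ,
      Ttilde s (Fn (n + 1)) t
        = (1 + (-Real.log (Fn n t))) * Ttilde s (Fn n) t
            + ∫ u in (0:ℝ)..t,
                Real.exp (-(s * (t - u))) * ((fn n u / Fn n u) * Ttilde s (Fn n) u) :=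
  Ttilde_recursion_general F f Fn fn hFcont hderiv hf hFpos hFle hF1 hf1 hFrec hfrec
end
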